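/- arXiv:1407.0341 — 13 statements merged into one kernel-verified Lean document; each statement's English description precedes it below -/
import Mathlib

section
/- Let K be a field of characteristic zero, L a Lie algebra over K, and x : ℕ → L a family of elements satisfying ⁅x(r+1), x(s)⁆ + ⁅x(s+1), x(r)⁆ = 0 for all r, s ∈ ℕ. Then ⁅x(r), x(s)⁆ = 0 for all r, s ∈ ℕ. -/
/-!
Iterating the relation moves one unit of index at a time from the left entry of a bracket to the
right one, so `⁅x r, x s⁆ = ⁅x 0, x (r + s)⁆`. The bracket is therefore symmetric in `r, s`, while
it is also antisymmetric; with no `2`-torsion it vanishes.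
-/

namespace LieRing

variable {L : Type*} [LieRing L] {x : ℕ → L}

theorem lie_add_left_eq_lie_add_right
    (hx : ∀ r s : ℕ, ⁅x (r + 1), x s⁆ + ⁅x (s + 1), x r⁆ = 0) (k r s : ℕ) :
    ⁅x (r + k), x s⁆ = ⁅x r, x (s + k)⁆ := by
  induction k generalizing s with
  | zero => rfl
  | succ k ih =>
    calc ⁅x (r + k + 1), x s⁆ = -⁅x (s + 1), x (r + k)⁆ := eq_neg_of_add_eq_zero_left (hx _ _)
      _ = ⁅x (r + k), x (s + 1)⁆ := lie_skew _ _
      _ = ⁅x r, x (s + 1 + k)⁆ := ih _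
      _ = ⁅x r, x (s + (k + 1))⁆ := by rw [Nat.add_right_comm, Nat.add_assoc]

theorem lie_comm_of_shift
    (hx : ∀ r s : ℕ, ⁅x (r + 1), x s⁆ + ⁅x (s + 1), x r⁆ = 0) (r s : ℕ) :
    ⁅x r, x s⁆ = ⁅x s, x r⁆ := by
  have h := lie_add_left_eq_lie_add_right hx
  calc ⁅x r, x s⁆ = ⁅x 0, x (s + r)⁆ := by simpa only [Nat.zero_add] using h r 0 s
    _ = ⁅x s, x r⁆ := by rw [Nat.add_comm]; simpa only [Nat.zero_add] using (h s 0 r).symm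

theorem lie_eq_zero_of_shift [IsAddTorsionFree L]
    (hx : ∀ r s : ℕ, ⁅x (r + 1), x s⁆ + ⁅x (s + 1), x r⁆ = 0) (r s : ℕ) :
    ⁅x r, x s⁆ = 0 :=
  self_eq_neg.mp <| (lie_comm_of_shift hx r s).trans (lie_skew _ _).symm

end LieRing

/-- Lemma 7.10, case `(X, d_i) ≠ (A_{2n}^{(2)}, 1)` (rescaled): the specialization at `q = 1`
of the Drinfeld relation (X1) implies that all brackets `⁅x r, x s⁆` vanish. -/
theorem stmt_1 (K : Type*) [Field K] [CharZero K]
    (L : Type*) [LieRing L] [LieAlgebra K L]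
    (x : ℕ → L)
    (hx : ∀ r s : ℕ, ⁅x (r + 1), x s⁆ + ⁅x (s + 1), x r⁆ = 0) :
    ∀ r s : ℕ, ⁅x r, x s⁆ = 0 := by
  have : IsAddTorsionFree L := .of_isTorsionFree K L
  exact LieRing.lie_eq_zero_of_shift hx
end

section
/- Let K be a field of characteristic zero, L a Lie algebra over K, and x : ℕ → L a family satisfying ⁅x(r+2), x(s)⁆ + ⁅x(s+2), x(r)⁆ = 0 for all r, s ∈ ℕ. Then: (1) ⁅x(r), x(s)⁆ = 0 whenever r + s is even; and (2) ⁅x(s+2h+1), x(s)⁆ = (−1)^h ⁅x(s+h+1), x(s+h)⁆ for all s, h ∈ ℕ. In particular (−1)^s ⁅x(r), x(s)⁆ depends only on r + s. -/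
/-!
Rewriting (X2) as `⁅x (r + 2), x s⁆ = ⁅x r, x (s + 2)⁆` shows that an index can be moved by `2`
from one slot of the bracket to the other. Moving `k` steps turns `⁅x (s + 2k), x s⁆` into its
own negative, so it vanishes in characteristic `≠ 2`; this gives vanishing for even `r + s`.
For odd `r + s` the same transfer gives `⁅x (r + 1), x s⁆ = ⁅x (s + 1), x r⁆`, which by
antisymmetry says that moving an index by `1` costs a sign, so that
`(-1) ^ s • ⁅x r, x s⁆ = ⁅x (r + s), x 0⁆`.
-/

/-- The relation (X2) at `q = 1` for `(A_{2n}^{(2)}, d_i = 1)`. -/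
def DrinfeldX2 {L : Type*} [LieRing L] (x : ℕ → L) : Prop :=
  ∀ r s : ℕ, ⁅x (r + 2), x s⁆ + ⁅x (s + 2), x r⁆ = 0

namespace DrinfeldX2

variable {L : Type*} [LieRing L] {x : ℕ → L}

theorem lie_add_two (hx : DrinfeldX2 x) (r s : ℕ) : ⁅x (r + 2), x s⁆ = ⁅x r, x (s + 2)⁆ := by
  rw [eq_neg_of_add_eq_zero_left (hx r s), lie_skew]

theorem lie_add_two_mul (hx : DrinfeldX2 x) (k r s : ℕ) :
    ⁅x (r + 2 * k), x s⁆ = ⁅x r, x (s + 2 * k)⁆ := by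
  induction k generalizing r s with
  | zero => rfl
  | succ k ih =>
    rw [show r + 2 * (k + 1) = r + 2 + 2 * k by ring, ih, hx.lie_add_two,
      show s + 2 * k + 2 = s + 2 * (k + 1) by ring]

theorem lie_eq_zero_of_even [IsAddTorsionFree L] (hx : DrinfeldX2 x) {r s : ℕ}
    (hrs : Even (r + s)) : ⁅x r, x s⁆ = 0 := by
  wlog hsr : s ≤ r generalizing r s
  · rw [← lie_skew, this (by rwa [add_comm]) (by omega), neg_zero]
  obtain ⟨k, rfl⟩ : ∃ k, r = s + 2 * k := ⟨(r - s) / 2, by grind⟩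
  apply self_eq_neg.mp
  nth_rw 1 [hx.lie_add_two_mul]
  exact (lie_skew _ _).symm

theorem lie_succ_comm [IsAddTorsionFree L] (hx : DrinfeldX2 x) (r s : ℕ) :
    ⁅x (r + 1), x s⁆ = ⁅x (s + 1), x r⁆ := by
  rcases Nat.even_or_odd (r + s) with hrs | hrs
  · wlog hsr : s ≤ r generalizing r s
    · exact (this s r (by rwa [add_comm]) (by omega)).symm
    obtain ⟨k, rfl⟩ : ∃ k, r = s + 2 * k := ⟨(r - s) / 2, by grind⟩
    rw [show s + 2 * k + 1 = s + 1 + 2 * k by ring, hx.lie_add_two_mul]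
  · rw [hx.lie_eq_zero_of_even (by grind), hx.lie_eq_zero_of_even (by grind)]

theorem neg_one_pow_smul_lie_succ [IsAddTorsionFree L] (hx : DrinfeldX2 x) (r s : ℕ) :
    (-1 : ℤ) ^ s • ⁅x (r + 1), x s⁆ = (-1 : ℤ) ^ (s + 1) • ⁅x r, x (s + 1)⁆ := by
  rw [hx.lie_succ_comm, pow_succ, mul_neg_one, neg_smul, ← smul_neg, lie_skew]

theorem neg_one_pow_smul_lie [IsAddTorsionFree L] (hx : DrinfeldX2 x) (r s : ℕ) :
    (-1 : ℤ) ^ s • ⁅x r, x s⁆ = ⁅x (r + s), x 0⁆ := by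
  induction s generalizing r with
  | zero => simp
  | succ s ih => rw [← hx.neg_one_pow_smul_lie_succ, ih, add_right_comm, add_assoc]

theorem lie_eq_neg_one_pow_smul [IsAddTorsionFree L] (hx : DrinfeldX2 x) (r s : ℕ) :
    ⁅x r, x s⁆ = (-1 : ℤ) ^ s • ⁅x (r + s), x 0⁆ := by
  rw [← hx.neg_one_pow_smul_lie, smul_smul, ← pow_add, Even.neg_one_pow ⟨s, rfl⟩, one_smul]

end DrinfeldX2

/-- Lemma 7.10, case `(X_{ñ}^{(k)}, d_i) = (A_{2n}^{(2)}, 1)`: the specialization at `q = 1`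
of the Drinfeld relation (X2) implies that `⁅x r, x s⁆ = 0` for `r + s` even, that
`⁅x (s+2h+1), x s⁆ = (−1)^h • ⁅x (s+h+1), x (s+h)⁆`, and in particular that
`(−1)^s • ⁅x r, x s⁆` depends only on `r + s`. -/
theorem stmt_2 (K : Type*) [Field K] [CharZero K]
    (L : Type*) [LieRing L] [LieAlgebra K L]
    (x : ℕ → L)
    (hx : ∀ r s : ℕ, ⁅x (r + 2), x s⁆ + ⁅x (s + 2), x r⁆ = 0) :
    (∀ r s : ℕ, Even (r + s) → ⁅x r, x s⁆ = 0) ∧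
    (∀ s h : ℕ, ⁅x (s + 2 * h + 1), x s⁆ = ((-1 : ℤ) ^ h) • ⁅x (s + h + 1), x (s + h)⁆) ∧
    (∀ r s r' s' : ℕ, r + s = r' + s' →
      ((-1 : ℤ) ^ s) • ⁅x r, x s⁆ = ((-1 : ℤ) ^ s') • ⁅x r', x s'⁆) := by
  have hx : DrinfeldX2 x := hx
  have : IsAddTorsionFree L := .of_isTorsionFree K L
  refine ⟨fun r s => hx.lie_eq_zero_of_even, fun s h => ?_, fun r s r' s' hsum => ?_⟩
  · rw [hx.lie_eq_neg_one_pow_smul (s + 2 * h + 1), hx.lie_eq_neg_one_pow_smul (s + h + 1),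
      smul_smul, ← pow_add,
      show s + h + 1 + (s + h) = s + 2 * h + 1 + s by ring, show h + (s + h) = s + 2 * h by ring,
      pow_add, pow_mul, neg_one_sq, one_pow, mul_one]
  · rw [hx.neg_one_pow_smul_lie, hx.neg_one_pow_smul_lie, hsum]
end

section
/- Let K be a field of characteristic zero, L a Lie algebra over K, and x : ℕ → L a family satisfying: (a) ⁅x(r+2), x(s)⁆ + ⁅x(s+2), x(r)⁆ = 0 for all r, s ∈ ℕ; and (b) for all r₁, r₂, r₃ ∈ ℕ, the sum over all six permutations σ of {1,2,3} of ⁅⁅x(r_{σ(1)}+1), x(r_{σ(2)})⁆, x(r_{σ(3)})⁆ equals 0. Then ⁅⁅x(a), x(b)⁆, x(c)⁆ = 0 for all a, b, c ∈ ℕ. -/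
/-!
Relation (x2) says `⁅x (r + 2), x s⁆ = ⁅x r, x (s + 2)⁆`: indices move by two between the two
slots. Hence `⁅x a, x b⁆ = 0` when `a + b` is even (it equals its own negative), and otherwise it
is `± ⁅x 0, x (2n + 1)⁆`. Grouping the six terms of (x3) in pairs turns it into the cyclic identity
`⁅S u v, x w⁆ + ⁅S v w, x u⁆ + ⁅S w u, x v⁆ = 0` for `S a b = ⁅x (a + 1), x b⁆ + ⁅x (b + 1), x a⁆`,
and `S a b` is `0` if `a + b` is odd and `± 2 ⁅x 0, x (a + b + 1)⁆` otherwise. Taking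
`(u, v, w) = (n, n, c)`, `(n - 1, n + 1, c)` or `(0, 0, c)`, according to parities, isolates a
single term and kills `⁅⁅x 0, x (2n + 1)⁆, x c⁆`; only `n = c = 0` needs division by `3`.
-/

open Finset

theorem Equiv.Perm.sum_fin_three {M : Type*} [AddCommMonoid M] (g : Fin 3 → Fin 3 → Fin 3 → M) :
    ∑ σ : Equiv.Perm (Fin 3), g (σ 0) (σ 1) (σ 2) =
      g 0 1 2 + g 1 0 2 + g 2 1 0 + g 0 2 1 + g 1 2 0 + g 2 0 1 := by
  rw [show (univ : Finset (Equiv.Perm (Fin 3))) =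
    {1, swap 0 1, swap 0 2, swap 1 2, finRotate 3, (finRotate 3)⁻¹} by decide]
  rw [sum_insert (by decide), sum_insert (by decide), sum_insert (by decide),
    sum_insert (by decide), sum_insert (by decide), sum_singleton]
  simp only [add_assoc]
  rfl

namespace LieAlgebra.ShiftFamily

variable {L : Type*} [LieRing L] {x : ℕ → L}

def symmLie (x : ℕ → L) (a b : ℕ) : L := ⁅x (a + 1), x b⁆ + ⁅x (b + 1), x a⁆

def oddLie (x : ℕ → L) (n : ℕ) : L := ⁅x 0, x (2 * n + 1)⁆

theorem symmLie_comm (x : ℕ → L) (a b : ℕ) : symmLie x a b = symmLie x b a :=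
  add_comm _ _

theorem sum_perm_lie_lie (r : Fin 3 → ℕ) :
    ∑ σ : Equiv.Perm (Fin 3), ⁅⁅x (r (σ 0) + 1), x (r (σ 1))⁆, x (r (σ 2))⁆ =
      ⁅symmLie x (r 0) (r 1), x (r 2)⁆ + ⁅symmLie x (r 1) (r 2), x (r 0)⁆ +
        ⁅symmLie x (r 2) (r 0), x (r 1)⁆ := by
  rw [Equiv.Perm.sum_fin_three (fun i j k => ⁅⁅x (r i + 1), x (r j)⁆, x (r k)⁆)]
  simp only [symmLie, add_lie]
  abel

section Shift

variable (hx : ∀ r s, ⁅x (r + 2), x s⁆ + ⁅x (s + 2), x r⁆ = 0)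
include hx

theorem lie_add_two (a b : ℕ) : ⁅x (a + 2), x b⁆ = ⁅x a, x (b + 2)⁆ := by
  rw [eq_neg_of_add_eq_zero_left (hx a b), lie_skew]

theorem lie_add_two_mul (k a b : ℕ) : ⁅x (a + 2 * k), x b⁆ = ⁅x a, x (b + 2 * k)⁆ := by
  induction k generalizing a b with
  | zero => rfl
  | succ k ih =>
    rw [show a + 2 * (k + 1) = a + 2 * k + 2 by ring, lie_add_two hx, ih,
      show b + 2 * (k + 1) = b + 2 + 2 * k by ring]

theorem lie_two_mul_two_mul_add_one (i j : ℕ) :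
    ⁅x (2 * i), x (2 * j + 1)⁆ = oddLie x (i + j) := by
  rw [oddLie, show 2 * (i + j) + 1 = 2 * j + 1 + 2 * i by ring, ← lie_add_two_mul hx, zero_add]

theorem lie_two_mul_add_one_two_mul (i j : ℕ) :
    ⁅x (2 * i + 1), x (2 * j)⁆ = -oddLie x (i + j) := by
  rw [← lie_skew, lie_two_mul_two_mul_add_one hx, add_comm]

theorem symmLie_two_mul_two_mul (i j : ℕ) :
    symmLie x (2 * i) (2 * j) = -(2 • oddLie x (i + j)) := by
  rw [symmLie, lie_two_mul_add_one_two_mul hx, lie_two_mul_add_one_two_mul hx, add_comm j,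
    two_nsmul, neg_add]

theorem symmLie_two_mul_add_one (i j : ℕ) :
    symmLie x (2 * i + 1) (2 * j + 1) = 2 • oddLie x (i + j + 1) := by
  have h (a b : ℕ) : ⁅x (2 * a + 1 + 1), x (2 * b + 1)⁆ = oddLie x (a + b + 1) := by
    rw [show 2 * a + 1 + 1 = 2 * (a + 1) by ring, lie_two_mul_two_mul_add_one hx, add_right_comm]
  rw [symmLie, h, h, add_comm j, two_nsmul]

variable [IsAddTorsionFree L]

theorem lie_eq_zero_of_even_add {a b : ℕ} (hab : Even (a + b)) : ⁅x a, x b⁆ = 0 := by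
  wlog hle : a ≤ b generalizing a b
  · rw [← lie_skew, this (by rwa [add_comm]) (by omega), neg_zero]
  obtain ⟨k, rfl⟩ : ∃ k, b = a + 2 * k := ⟨(b - a) / 2, by grind⟩
  have h := lie_add_two_mul hx k a a
  rw [← lie_skew] at h
  rw [← nsmul_right_inj two_ne_zero, nsmul_zero, two_nsmul]
  nth_rw 1 [← h]
  exact neg_add_cancel _

theorem symmLie_eq_zero_of_odd_add {a b : ℕ} (hab : Odd (a + b)) : symmLie x a b = 0 := by
  rw [symmLie, lie_eq_zero_of_even_add hx, lie_eq_zero_of_even_add hx, add_zero]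
  all_goals grind

theorem lie_oddLie_eq_zero_of_lie_symmLie {a b c n : ℕ} (hab : a + b = 2 * n)
    (h : ⁅symmLie x a b, x c⁆ = 0) : ⁅oddLie x n, x c⁆ = 0 := by
  obtain ⟨i, rfl | rfl⟩ := Nat.even_or_odd' a
  · obtain ⟨j, rfl⟩ : ∃ j, b = 2 * j := ⟨b / 2, by omega⟩
    rwa [symmLie_two_mul_two_mul hx, neg_lie, neg_eq_zero, nsmul_lie,
      smul_eq_zero_iff_right two_ne_zero, show i + j = n by omega] at h
  · obtain ⟨j, rfl⟩ : ∃ j, b = 2 * j + 1 := ⟨b / 2, by omega⟩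
    rwa [symmLie_two_mul_add_one hx, nsmul_lie, smul_eq_zero_iff_right two_ne_zero,
      show i + j + 1 = n by omega] at h

variable (hsym : ∀ r : Fin 3 → ℕ,
  ∑ σ : Equiv.Perm (Fin 3), ⁅⁅x (r (σ 0) + 1), x (r (σ 1))⁆, x (r (σ 2))⁆ = 0)
include hsym

omit hx [IsAddTorsionFree L] in
theorem lie_symmLie_cyclic (u v w : ℕ) :
    ⁅symmLie x u v, x w⁆ + ⁅symmLie x v w, x u⁆ + ⁅symmLie x w u, x v⁆ = 0 := by
  have h := hsym ![u, v, w]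
  rwa [sum_perm_lie_lie] at h

theorem lie_oddLie_eq_zero_of_odd_add {n c : ℕ} (h : Odd (n + c)) :
    ⁅oddLie x n, x c⁆ = 0 := by
  refine lie_oddLie_eq_zero_of_lie_symmLie hx (a := n) (b := n) (two_mul n).symm ?_
  have := lie_symmLie_cyclic hsym n n c
  rwa [symmLie_eq_zero_of_odd_add hx h, symmLie_eq_zero_of_odd_add hx
    (by rwa [add_comm] : Odd (c + n)), zero_lie, add_zero, add_zero] at this

theorem lie_oddLie_succ_eq_zero (m c : ℕ) : ⁅oddLie x (m + 1), x c⁆ = 0 := by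
  rcases Nat.even_or_odd (m + 1 + c) with hc | hc
  · refine lie_oddLie_eq_zero_of_lie_symmLie hx (a := m) (b := m + 2) (by ring) ?_
    have := lie_symmLie_cyclic hsym m (m + 2) c
    rwa [symmLie_eq_zero_of_odd_add hx (a := m + 2) (b := c) (by grind),
      symmLie_eq_zero_of_odd_add hx (a := c) (b := m) (by grind),
      zero_lie, zero_lie, add_zero, add_zero] at this
  · exact lie_oddLie_eq_zero_of_odd_add hx hsym hc

theorem lie_oddLie_zero_eq_zero (c : ℕ) : ⁅oddLie x 0, x c⁆ = 0 := by
  obtain ⟨k, rfl | rfl⟩ := Nat.even_or_odd' c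
  · refine lie_oddLie_eq_zero_of_lie_symmLie hx (a := 0) (b := 0) rfl ?_
    have := lie_symmLie_cyclic hsym 0 0 (2 * k)
    cases k with
    | zero =>
      rw [← two_nsmul, ← succ_nsmul, smul_eq_zero_iff_right three_ne_zero] at this
      exact this
    | succ m =>
      have hm : ⁅symmLie x 0 (2 * (m + 1)), x 0⁆ = 0 := by
        simpa [symmLie_two_mul_two_mul hx 0 (m + 1)] using lie_oddLie_succ_eq_zero hx hsym m 0
      rwa [symmLie_comm x (2 * (m + 1)), hm, add_zero, add_zero] at this
  · exact lie_oddLie_eq_zero_of_odd_add hx hsym (by simp)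

theorem lie_oddLie_eq_zero (n c : ℕ) : ⁅oddLie x n, x c⁆ = 0 := by
  cases n with
  | zero => exact lie_oddLie_zero_eq_zero hx hsym c
  | succ m => exact lie_oddLie_succ_eq_zero hx hsym m c

theorem lie_lie_eq_zero (a b c : ℕ) : ⁅⁅x a, x b⁆, x c⁆ = 0 := by
  obtain ⟨i, rfl | rfl⟩ := Nat.even_or_odd' a <;> obtain ⟨j, rfl | rfl⟩ := Nat.even_or_odd' b
  · rw [lie_eq_zero_of_even_add hx (by simp [← mul_add]), zero_lie]
  · rw [lie_two_mul_two_mul_add_one hx, lie_oddLie_eq_zero hx hsym]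
  · rw [lie_two_mul_add_one_two_mul hx, neg_lie, lie_oddLie_eq_zero hx hsym, neg_zero]
  · rw [lie_eq_zero_of_even_add hx (by grind), zero_lie]

end Shift

end LieAlgebra.ShiftFamily

/-- Lemma 7.12: in the case `(X_{ñ}^{(k)}, d_i) = (A_{2n}^{(2)}, 1)`, relations
(x_{1,2}) (here in their equivalent form (x2)) and (x3) imply relation (x_3):
all double brackets `⁅⁅x a, x b⁆, x c⁆` vanish. -/
theorem stmt_3 (K : Type*) [Field K] [CharZero K]
    (L : Type*) [LieRing L] [LieAlgebra K L]
    (x : ℕ → L)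
    (hx2 : ∀ r s : ℕ, ⁅x (r + 2), x s⁆ + ⁅x (s + 2), x r⁆ = 0)
    (hx3 : ∀ r : Fin 3 → ℕ,
      ∑ σ : Equiv.Perm (Fin 3), ⁅⁅x (r (σ 0) + 1), x (r (σ 1))⁆, x (r (σ 2))⁆ = 0) :
    ∀ a b c : ℕ, ⁅⁅x a, x b⁆, x c⁆ = 0 := by
  have : IsAddTorsionFree L := .of_isTorsionFree K L
  exact LieAlgebra.ShiftFamily.lie_lie_eq_zero hx2 hx3
end

section
/- Let L be a Lie algebra over a commutative ring, k ≥ 1 a natural number, and x, y : ℕ → L two families such that: (a) ⁅x(a), x(b)⁆ = 0 for all a, b ∈ ℕ; and (b) ⁅y(s+1), x(r)⁆ = ⁅y(s), x(r+k)⁆ for all s, r ∈ ℕ. Then for all s, r₁, r₂ ∈ ℕ such that k divides r₁ and r₂, one has ⁅⁅y(s), x(r₁)⁆, x(r₂)⁆ = ⁅⁅y(s + (r₁+r₂)/k), x(0)⁆, x(0)⁆. -/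
/-- Lemma 7.14 (i) (case `d̃_i ≥ d̃_j`, `(X, d_i) ≠ (A_{2n}^{(2)}, 1)`, rescaled):
if all brackets `⁅x a, x b⁆` vanish and `⁅y (s+1), x r⁆ = ⁅y s, x (r+k)⁆`, then for `r₁, r₂`
multiples of `k` one has `⁅⁅y s, x r₁⁆, x r₂⁆ = ⁅⁅y (s + (r₁+r₂)/k), x 0⁆, x 0⁆`. -/
theorem stmt_4 (R : Type*) [CommRing R]
    (L : Type*) [LieRing L] [LieAlgebra R L]
    (k : ℕ) (hk : 1 ≤ k) (x y : ℕ → L)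
    (ha : ∀ a b : ℕ, ⁅x a, x b⁆ = 0)
    (hb : ∀ s r : ℕ, ⁅y (s + 1), x r⁆ = ⁅y s, x (r + k)⁆) :
    ∀ s r₁ r₂ : ℕ, k ∣ r₁ → k ∣ r₂ →
      ⁅⁅y s, x r₁⁆, x r₂⁆ = ⁅⁅y (s + (r₁ + r₂) / k), x 0⁆, x 0⁆ := by
  have hshift : ∀ m s : ℕ, ⁅y s, x (m * k)⁆ = ⁅y (s + m), x 0⁆ := by
    intro m
    induction m with
    | zero => simp
    | succ n ih =>
      intro s
      have : (n + 1) * k = n * k + k := by ring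
      rw [this, ← hb, ih (s + 1)]
      ring_nf
  have hsymm : ∀ s a b : ℕ, ⁅⁅y s, x a⁆, x b⁆ = ⁅⁅y s, x b⁆, x a⁆ := by
    intro s a b
    have h := leibniz_lie (y s) (x a) (x b)
    rw [ha a b] at h
    simp only [lie_zero] at h
    have h2 := leibniz_lie (y s) (x b) (x a)
    rw [ha b a] at h2
    simp only [lie_zero] at h2
    have e1 : ⁅⁅y s, x a⁆, x b⁆ = -⁅x a, ⁅y s, x b⁆⁆ := by
      rw [eq_neg_iff_add_eq_zero]; exact h.symm
    exact e1.trans (lie_skew (⁅y s, x b⁆) (x a))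
  rintro s r₁ r₂ ⟨a, rfl⟩ ⟨b, rfl⟩
  have hdiv : (k * a + k * b) / k = a + b := by
    rw [← Nat.mul_add, Nat.mul_div_cancel_left _ hk]
  rw [hdiv]
  rw [show k * a = a * k from Nat.mul_comm k a, hshift a s,
    hsymm (s + a) 0 (k * b), show k * b = b * k from Nat.mul_comm k b,
    hshift b (s + a), hsymm (s + a + b) 0 0, Nat.add_assoc]
end

section
/- Let K be a field of characteristic zero, L a Lie algebra over K, and x, y : ℕ → L two families such that: (a) ⁅x(r+2), x(s)⁆ + ⁅x(s+2), x(r)⁆ = 0 for all r, s ∈ ℕ; and (b) ⁅y(s+1), x(r)⁆ = ⁅y(s), x(r+1)⁆ for all s, r ∈ ℕ. Then ⁅⁅y(s), x(r₁)⁆, x(r₂)⁆ depends only on the pair (s + r₁ + r₂, r₂ mod 2): if s + r₁ + r₂ = s' + r₁' + r₂' and r₂ ≡ r₂' (mod 2), then ⁅⁅y(s), x(r₁)⁆, x(r₂)⁆ = ⁅⁅y(s'), x(r₁')⁆, x(r₂')⁆. -/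
/-!
By (b), `⁅y s, x r⁆ = ⁅y 0, x (s + r)⁆`, so it suffices to study
`G a b = ⁅⁅y 0, x a⁆, x b⁆`. Bracketing (a) with `y t` and expanding by the Leibniz rule shows
that `D a b = G (a + 2) b - G a (b + 2)` satisfies `D (t + r) s + D (t + s) r = 0`. For
`r = s = 0` this says `2 • D t 0 = 0`, so `D t 0 = 0` in characteristic zero, and then
`r = 0` gives `D = 0`: moving `2` from the first index of `G` to the second does not change it.
-/

section IndexShift

variable {M : Type*}

theorem eq_apply_zero_add_of_apply_succ_left (f : ℕ → ℕ → M)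
    (hf : ∀ s r, f (s + 1) r = f s (r + 1)) (s r : ℕ) : f s r = f 0 (s + r) := by
  induction s generalizing r with
  | zero => rw [Nat.zero_add]
  | succ n ih => rw [hf, ih, Nat.add_right_comm, Nat.add_assoc]

theorem apply_add_two_mul_left (f : ℕ → ℕ → M) (hf : ∀ a b, f (a + 2) b = f a (b + 2))
    (k a b : ℕ) : f (a + 2 * k) b = f a (b + 2 * k) := by
  induction k generalizing b with
  | zero => rfl
  | succ k ih => rw [Nat.mul_succ, ← Nat.add_assoc, hf, ih, Nat.add_right_comm, Nat.add_assoc]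

theorem eq_of_add_eq_of_mod_two_eq (f : ℕ → ℕ → M) (hf : ∀ a b, f (a + 2) b = f a (b + 2))
    {a b a' b' : ℕ} (hsum : a + b = a' + b') (hpar : b % 2 = b' % 2) : f a b = f a' b' := by
  wlog hle : b ≤ b' generalizing a b a' b'
  · exact (this hsum.symm hpar.symm (Nat.le_of_not_le hle)).symm
  obtain ⟨k, rfl⟩ : ∃ k, b' = b + 2 * k := ⟨(b' - b) / 2, by omega⟩
  obtain rfl : a = a' + 2 * k := by omega
  exact apply_add_two_mul_left f hf k a' b

theorem eq_zero_of_apply_add_add_apply_add_eq_zero [AddCommGroup M] [IsAddTorsionFree M]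
    (D : ℕ → ℕ → M) (hD : ∀ t r s, D (t + r) s + D (t + s) r = 0) (a b : ℕ) : D a b = 0 := by
  have hD0 (t : ℕ) : D t 0 = 0 := by
    simpa [← two_nsmul] using hD t 0 0
  simpa [hD0] using hD a 0 b

end IndexShift

section LieBrackets

variable {L : Type*} [LieRing L] (x y : ℕ → L)

theorem lie_lie_eq_sub_of_lie_succ (hb : ∀ s r, ⁅y (s + 1), x r⁆ = ⁅y s, x (r + 1)⁆)
    (t a b : ℕ) :
    ⁅y t, ⁅x a, x b⁆⁆ = ⁅⁅y 0, x (t + a)⁆, x b⁆ - ⁅⁅y 0, x (t + b)⁆, x a⁆ := by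
  have hz := eq_apply_zero_add_of_apply_succ_left (fun s r => ⁅y s, x r⁆) hb
  rw [leibniz_lie, ← lie_skew (x a), hz t a, hz t b]
  abel

theorem lie_lie_add_two_left [IsAddTorsionFree L]
    (ha : ∀ r s, ⁅x (r + 2), x s⁆ + ⁅x (s + 2), x r⁆ = 0)
    (hb : ∀ s r, ⁅y (s + 1), x r⁆ = ⁅y s, x (r + 1)⁆) (a b : ℕ) :
    ⁅⁅y 0, x (a + 2)⁆, x b⁆ = ⁅⁅y 0, x a⁆, x (b + 2)⁆ := by
  rw [← sub_eq_zero]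
  refine eq_zero_of_apply_add_add_apply_add_eq_zero
    (fun a b => ⁅⁅y 0, x (a + 2)⁆, x b⁆ - ⁅⁅y 0, x a⁆, x (b + 2)⁆) (fun t r s => ?_) a b
  have h := congrArg (⁅y t, ·⁆) (ha r s)
  simp only [lie_add, lie_zero, lie_lie_eq_sub_of_lie_succ x y hb, ← Nat.add_assoc] at h
  rw [← h]
  abel

end LieBrackets

/-- Lemma 7.14 (ii), case `(X_{ñ}^{(k)}, d_i) = (A_{2n}^{(2)}, 1)`: under relations
(x_{1,2}) (in the form (x2)) for `x` and (x_d) for the mixed brackets, the double bracket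
`⁅⁅y s, x r₁⁆, x r₂⁆` depends only on `(s + r₁ + r₂, r₂ mod 2)`. -/
theorem stmt_5 (K : Type*) [Field K] [CharZero K]
    (L : Type*) [LieRing L] [LieAlgebra K L]
    (x y : ℕ → L)
    (ha : ∀ r s : ℕ, ⁅x (r + 2), x s⁆ + ⁅x (s + 2), x r⁆ = 0)
    (hb : ∀ s r : ℕ, ⁅y (s + 1), x r⁆ = ⁅y s, x (r + 1)⁆) :
    ∀ s r₁ r₂ s' r₁' r₂' : ℕ, s + r₁ + r₂ = s' + r₁' + r₂' → r₂ % 2 = r₂' % 2 →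
      ⁅⁅y s, x r₁⁆, x r₂⁆ = ⁅⁅y s', x r₁'⁆, x r₂'⁆ := by
  intro s r₁ r₂ s' r₁' r₂' hsum hpar
  have : IsAddTorsionFree L := .of_isTorsionFree K L
  have hz := eq_apply_zero_add_of_apply_succ_left (fun s r => ⁅y s, x r⁆) hb
  rw [hz s r₁, hz s' r₁']
  exact eq_of_add_eq_of_mod_two_eq (fun a b => ⁅⁅y 0, x a⁆, x b⁆)
    (lie_lie_add_two_left x y ha hb) hsum hpar
end

section
/- Let L be a Lie algebra over a commutative ring, k ≥ 1 a natural number, and x, y : ℕ → L two families such that: (a) ⁅x(a), x(b)⁆ = 0 for all a, b ∈ ℕ; and (b) ⁅y(s+1), x(r)⁆ = ⁅y(s), x(r+k)⁆ for all s, r ∈ ℕ. Then ⁅⁅y(s), x(r₁)⁆, x(r₂)⁆ depends only on the pair (k·s + r₁ + r₂, r₂ mod k): if k·s + r₁ + r₂ = k·s' + r₁' + r₂' and r₂ ≡ r₂' (mod k), then ⁅⁅y(s), x(r₁)⁆, x(r₂)⁆ = ⁅⁅y(s'), x(r₁')⁆, x(r₂')⁆. -/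
/-!
Relation (b) trades one step in `s` for `k` steps in `r`, so `⁅y s, x r⁆ = ⁅y 0, x (k * s + r)⁆`.
Since the `x r` commute, the Jacobi identity makes `⁅⁅y s, x r₁⁆, x r₂⁆` symmetric in `r₁, r₂`;
swapping twice moves the multiple `k * (r₂ / k)` of `r₂` into the inner bracket, leaving the
normal form `⁅⁅y 0, x (k * s + r₁ + k * (r₂ / k))⁆, x (r₂ % k)⁆`, which only depends on
`k * s + r₁ + r₂` and `r₂ % k`.
-/

section

variable {L : Type*} [LieRing L]

theorem lie_lie_swap_of_lie_eq_zero {a b : L} (z : L) (h : ⁅a, b⁆ = 0) :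
    ⁅⁅z, a⁆, b⁆ = ⁅⁅z, b⁆, a⁆ := by
  rw [lie_lie, h, lie_zero, zero_sub, lie_skew]

variable {k : ℕ} {x y : ℕ → L}

theorem lie_eq_lie_zero_of_lie_succ (hb : ∀ s r : ℕ, ⁅y (s + 1), x r⁆ = ⁅y s, x (r + k)⁆)
    (s r : ℕ) : ⁅y s, x r⁆ = ⁅y 0, x (k * s + r)⁆ := by
  induction s generalizing r with
  | zero => simp
  | succ n ih => rw [hb, ih]; ring_nf

theorem lie_lie_eq_lie_lie_zero_mod (ha : ∀ a b : ℕ, ⁅x a, x b⁆ = 0)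
    (hb : ∀ s r : ℕ, ⁅y (s + 1), x r⁆ = ⁅y s, x (r + k)⁆) (s r₁ r₂ : ℕ) :
    ⁅⁅y s, x r₁⁆, x r₂⁆ = ⁅⁅y 0, x (k * s + r₁ + k * (r₂ / k))⁆, x (r₂ % k)⁆ := by
  have hy := lie_eq_lie_zero_of_lie_succ hb
  calc ⁅⁅y s, x r₁⁆, x r₂⁆
      = ⁅⁅y 0, x (k * (r₂ / k) + r₂ % k)⁆, x (k * s + r₁)⁆ := by
        rw [hy s r₁, lie_lie_swap_of_lie_eq_zero _ (ha _ _), Nat.div_add_mod]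
    _ = ⁅⁅y (r₂ / k), x (k * s + r₁)⁆, x (r₂ % k)⁆ := by
        rw [← hy, lie_lie_swap_of_lie_eq_zero _ (ha _ _)]
    _ = ⁅⁅y 0, x (k * s + r₁ + k * (r₂ / k))⁆, x (r₂ % k)⁆ := by
        rw [hy, add_comm (k * (r₂ / k))]

end

theorem stmt_6_general
    (L : Type*) [LieRing L]
    (k : ℕ) (x y : ℕ → L)
    (ha : ∀ a b : ℕ, ⁅x a, x b⁆ = 0)
    (hb : ∀ s r : ℕ, ⁅y (s + 1), x r⁆ = ⁅y s, x (r + k)⁆) :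
    ∀ s r₁ r₂ s' r₁' r₂' : ℕ,
      k * s + r₁ + r₂ = k * s' + r₁' + r₂' → r₂ % k = r₂' % k →
      ⁅⁅y s, x r₁⁆, x r₂⁆ = ⁅⁅y s', x r₁'⁆, x r₂'⁆ := by
  intro s r₁ r₂ s' r₁' r₂' hsum hmod
  have h₂ := Nat.div_add_mod r₂ k
  have h₂' := Nat.div_add_mod r₂' k
  rw [lie_lie_eq_lie_lie_zero_mod ha hb s, lie_lie_eq_lie_lie_zero_mod ha hb s', hmod]
  have hinner : k * s + r₁ + k * (r₂ / k) = k * s' + r₁' + k * (r₂' / k) := by linarith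
  rw [hinner]

/-- Lemma 7.14 (ii), case `1 = d̃_i < d̃_j = k` (rescaled): if all brackets `⁅x a, x b⁆`
vanish and `⁅y (s+1), x r⁆ = ⁅y s, x (r+k)⁆`, then `⁅⁅y s, x r₁⁆, x r₂⁆` depends only on
the pair `(k·s + r₁ + r₂, r₂ mod k)`. -/
theorem stmt_6 (R : Type*) [CommRing R]
    (L : Type*) [LieRing L] [LieAlgebra R L]
    (k : ℕ) (hk : 1 ≤ k) (x y : ℕ → L)
    (ha : ∀ a b : ℕ, ⁅x a, x b⁆ = 0)
    (hb : ∀ s r : ℕ, ⁅y (s + 1), x r⁆ = ⁅y s, x (r + k)⁆) :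
    ∀ s r₁ r₂ s' r₁' r₂' : ℕ,
      k * s + r₁ + r₂ = k * s' + r₁' + r₂' → r₂ % k = r₂' % k →
      ⁅⁅y s, x r₁⁆, x r₂⁆ = ⁅⁅y s', x r₁'⁆, x r₂'⁆ :=
  stmt_6_general L k x y ha hb
end

section
/- Let K be a field of characteristic zero, L a Lie algebra over K, and x, y : ℕ → L two families such that ⁅x(a), x(b)⁆ = 0 for all a, b ∈ ℕ and ⁅y(s+1), x(r)⁆ = ⁅y(s), x(r+2)⁆ for all s, r ∈ ℕ. Then the following two conditions are equivalent: (A) for all s, r₁, r₂ ∈ ℕ, ⁅⁅y(s), x(r₁+1)⁆, x(r₂)⁆ + ⁅⁅y(s), x(r₂+1)⁆, x(r₁)⁆ = 0; (B) for all s ∈ ℕ, ⁅⁅y(s), x(1)⁆, x(0)⁆ = 0 and ⁅⁅y(s), x(1)⁆, x(1)⁆ + ⁅⁅y(s+1), x(0)⁆, x(0)⁆ = 0. -/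
/-!
Write `T s r₁ r₂` for the left-hand side of (A). Since the `ad (x r)` commute, `T` is symmetric
in `r₁, r₂`, and the shift relation `⁅y (s + 1), x r⁆ = ⁅y s, x (r + 2)⁆` gives
`T s (r₁ + 2) r₂ = T (s + 1) r₁ r₂`. So (A) reduces to `r₁, r₂ ∈ {0, 1}`, where
`T s 0 0 = 2 ⁅⁅y s, x 1⁆, x 0⁆`, `T s 0 1` is the second relation of (B), and
`T s 1 1 = 2 ⁅⁅y (s + 1), x 1⁆, x 0⁆`.
-/

theorem Nat.forall_forall_of_symm_of_add_two {P : ℕ → ℕ → Prop}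
    (symm : ∀ m n, P m n → P n m) (h00 : P 0 0) (h01 : P 0 1) (h11 : P 1 1)
    (add_two : ∀ m n, P m n → P (m + 2) n) : ∀ m n, P m n := by
  have add_two_right m n (h : P m n) : P m (n + 2) := symm _ _ (add_two _ _ (symm _ _ h))
  have small : ∀ n, P 0 n ∧ P 1 n :=
    Nat.twoStepInduction ⟨h00, symm _ _ h01⟩ ⟨h01, h11⟩
      fun n ⟨h0, h1⟩ _ ↦ ⟨add_two_right _ _ h0, add_two_right _ _ h1⟩
  intro m n
  induction m using Nat.twoStepInduction with
  | zero => exact (small n).1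
  | one => exact (small n).2
  | more m ih _ => exact add_two _ _ ih

theorem lie_lie_right_comm_of_lie_eq_zero {L : Type*} [LieRing L] {a b : L} (h : ⁅a, b⁆ = 0)
    (v : L) : ⁅⁅v, a⁆, b⁆ = ⁅⁅v, b⁆, a⁆ := by
  rw [lie_lie, h, lie_zero, zero_sub, lie_skew]

section T2

variable {L : Type*} [LieRing L] (x y : ℕ → L)

def t2Term (s r₁ r₂ : ℕ) : L := ⁅⁅y s, x (r₁ + 1)⁆, x r₂⁆ + ⁅⁅y s, x (r₂ + 1)⁆, x r₁⁆

variable {x y}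

theorem t2Term_comm (s r₁ r₂ : ℕ) : t2Term x y s r₁ r₂ = t2Term x y s r₂ r₁ :=
  add_comm _ _

theorem t2Term_self (s r : ℕ) : t2Term x y s r r = 2 • ⁅⁅y s, x (r + 1)⁆, x r⁆ :=
  (two_nsmul _).symm

theorem t2Term_zero_one (hb : ∀ s r : ℕ, ⁅y (s + 1), x r⁆ = ⁅y s, x (r + 2)⁆) (s : ℕ) :
    t2Term x y s 0 1 = ⁅⁅y s, x 1⁆, x 1⁆ + ⁅⁅y (s + 1), x 0⁆, x 0⁆ := by
  rw [hb]
  rfl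

variable (ha : ∀ a b : ℕ, ⁅x a, x b⁆ = 0) (hb : ∀ s r : ℕ, ⁅y (s + 1), x r⁆ = ⁅y s, x (r + 2)⁆)
include ha hb

theorem t2Term_one_one (s : ℕ) : t2Term x y s 1 1 = 2 • ⁅⁅y (s + 1), x 1⁆, x 0⁆ := by
  rw [t2Term_self]
  change 2 • ⁅⁅y s, x (0 + 2)⁆, x 1⁆ = _
  rw [← hb, lie_lie_right_comm_of_lie_eq_zero (ha 0 1)]

theorem t2Term_add_two (s r₁ r₂ : ℕ) : t2Term x y s (r₁ + 2) r₂ = t2Term x y (s + 1) r₁ r₂ := by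
  rw [t2Term, t2Term, Nat.add_right_comm r₁ 2 1, ← hb,
    lie_lie_right_comm_of_lie_eq_zero (ha (r₂ + 1) (r₁ + 2)), ← hb,
    lie_lie_right_comm_of_lie_eq_zero (ha r₁ (r₂ + 1))]

theorem t2Term_eq_zero (h10 : ∀ s, ⁅⁅y s, x 1⁆, x 0⁆ = 0)
    (h11 : ∀ s, ⁅⁅y s, x 1⁆, x 1⁆ + ⁅⁅y (s + 1), x 0⁆, x 0⁆ = 0) (s r₁ r₂ : ℕ) :
    t2Term x y s r₁ r₂ = 0 := by
  revert s
  refine Nat.forall_forall_of_symm_of_add_two (P := fun r₁ r₂ ↦ ∀ s, t2Term x y s r₁ r₂ = 0)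
    (fun m n h s ↦ ?_) (fun s ↦ ?_) (fun s ↦ ?_) (fun s ↦ ?_) (fun m n h s ↦ ?_) r₁ r₂
  · rw [t2Term_comm, h]
  · rw [t2Term_self, h10, smul_zero]
  · rw [t2Term_zero_one hb, h11]
  · rw [t2Term_one_one ha hb, h10, smul_zero]
  · rw [t2Term_add_two ha hb, h]

end T2

/-- Proposition 7.15 (case `k = 2`, `a_{ij} = −2`, `X_{ñ}^{(k)} ≠ A_{2n}^{(2)}`, rescaled):
under relations (x_{1,2}) and (x_d), relation (t2) is equivalent to relations (t₂') and (t₂''). -/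
theorem stmt_7 (K : Type*) [Field K] [CharZero K]
    (L : Type*) [LieRing L] [LieAlgebra K L]
    (x y : ℕ → L)
    (ha : ∀ a b : ℕ, ⁅x a, x b⁆ = 0)
    (hb : ∀ s r : ℕ, ⁅y (s + 1), x r⁆ = ⁅y s, x (r + 2)⁆) :
    (∀ s r₁ r₂ : ℕ, ⁅⁅y s, x (r₁ + 1)⁆, x r₂⁆ + ⁅⁅y s, x (r₂ + 1)⁆, x r₁⁆ = 0) ↔
    ((∀ s : ℕ, ⁅⁅y s, x 1⁆, x 0⁆ = 0) ∧
     (∀ s : ℕ, ⁅⁅y s, x 1⁆, x 1⁆ + ⁅⁅y (s + 1), x 0⁆, x 0⁆ = 0)) := by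
  have : IsAddTorsionFree L := .of_isTorsionFree K L
  refine ⟨fun hA ↦ ⟨fun s ↦ ?_, fun s ↦ ?_⟩, fun ⟨h10, h11⟩ ↦ t2Term_eq_zero ha hb h10 h11⟩
  · have h00 : t2Term x y s 0 0 = 0 := hA s 0 0
    rwa [t2Term_self, two_nsmul_eq_zero] at h00
  · rw [← t2Term_zero_one hb]
    exact hA s 0 1
end

section
/- Let K be a field of characteristic zero, L a Lie algebra over K, and x, y : ℕ → L two families such that ⁅x(r+2), x(s)⁆ + ⁅x(s+2), x(r)⁆ = 0 for all r, s ∈ ℕ and ⁅y(s+1), x(r)⁆ = ⁅y(s), x(r+1)⁆ for all s, r ∈ ℕ. Then the following two conditions are equivalent: (A) for all s, r₁, r₂ ∈ ℕ, ⁅⁅y(s), x(r₁+1)⁆, x(r₂)⁆ + ⁅⁅y(s), x(r₂)⁆, x(r₁+1)⁆ + ⁅⁅y(s), x(r₂+1)⁆, x(r₁)⁆ + ⁅⁅y(s), x(r₁)⁆, x(r₂+1)⁆ = 0; (B) for all s ∈ ℕ, ⁅⁅y(s), x(0)⁆, x(1)⁆ + ⁅⁅y(s+1), x(0)⁆, x(0)⁆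 = 0. -/
/-!
Put `F a b = ⁅⁅y 0, x a⁆, x b⁆`. Relation (x_d) gives `⁅y s, x a⁆ = ⁅y 0, x (s + a)⁆`, so both
conditions only involve `F`: (B) says `F a 1 + F (a + 1) 0 = 0`, and (A) is the sum of two
instances of `F a (b + 1) + F (a + 1) b = 0`; at `r₁ = r₂ = 0` it is twice (B), and we halve in
characteristic zero. Conversely, bracketing the relation (x_{1,2}) with `y s` and halving once
more shows `F (a + 2) b = F a (b + 2)`, which moves the identity from `b` to `b + 2`, so it
follows for all `b` from its cases `b = 0` (which is (B)) and `b = 1` (which is (B) at `a + 1`).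
-/

theorem eq_of_add_self_eq_add_self {M : Type*} [AddMonoid M] [IsAddTorsionFree M] {z w : M}
    (h : z + z = w + w) : z = w :=
  nsmul_right_injective two_ne_zero (by simpa only [two_nsmul] using h)

section DoubleSequence

variable {M : Type*} [AddCommGroup M] (F : ℕ → ℕ → M)

theorem apply_add_two_eq_apply_add_two_of_sum_eq [IsAddTorsionFree M]
    (hF : ∀ n r t, F (n + r + 2) t + F (n + t + 2) r = F (n + r) (t + 2) + F (n + t) (r + 2))
    (a b : ℕ) : F (a + 2) b = F a (b + 2) := by
  have hdiag : ∀ n, F (n + 2) 0 = F n 2 := fun n => eq_of_add_self_eq_add_self (hF n 0 0)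
  have h := hF a 0 b
  rw [Nat.add_zero, hdiag (a + b)] at h
  exact add_right_cancel h

theorem apply_add_one_add_apply_eq_zero (hshift : ∀ a b, F (a + 2) b = F a (b + 2))
    (hzero : ∀ a, F a 1 + F (a + 1) 0 = 0) (a b : ℕ) : F a (b + 1) + F (a + 1) b = 0 := by
  induction b using Nat.twoStepInduction generalizing a with
  | zero => exact hzero a
  | one => rw [← hshift, add_comm]; exact hzero (a + 1)
  | more b ih _ => rw [← hshift, ← hshift]; exact ih (a + 2)

end DoubleSequence

section LieRing

variable {L : Type*} [LieRing L] {x y : ℕ → L}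

theorem lie_eq_lie_zero_add (hb : ∀ s r, ⁅y (s + 1), x r⁆ = ⁅y s, x (r + 1)⁆) (s a : ℕ) :
    ⁅y s, x a⁆ = ⁅y 0, x (s + a)⁆ := by
  induction s generalizing a with
  | zero => rw [Nat.zero_add]
  | succ n ih => rw [hb, ih, Nat.add_right_comm, Nat.add_assoc]

theorem lie_lie_add_two_add_lie_lie_add_two (ha : ∀ r s, ⁅x (r + 2), x s⁆ + ⁅x (s + 2), x r⁆ = 0)
    (hb : ∀ s r, ⁅y (s + 1), x r⁆ = ⁅y s, x (r + 1)⁆) (n r t : ℕ) :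
    ⁅⁅y 0, x (n + r + 2)⁆, x t⁆ + ⁅⁅y 0, x (n + t + 2)⁆, x r⁆ =
      ⁅⁅y 0, x (n + r)⁆, x (t + 2)⁆ + ⁅⁅y 0, x (n + t)⁆, x (r + 2)⁆ := by
  have h := congrArg (⁅y n, ·⁆) (ha r t)
  simp only [lie_add, leibniz_lie (y n), lie_eq_lie_zero_add hb n, lie_zero, ← Nat.add_assoc] at h
  rw [← lie_skew (x (r + 2)), ← lie_skew (x (t + 2))] at h
  rw [← sub_eq_zero, ← h]
  abel

end LieRing

/-- Proposition 7.16 (case `a_{ij} = −2`, `X_{ñ}^{(k)} = A_{2n}^{(2)}`): under relations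
(x_{1,2}) (the `A_{2n}^{(2)}` form, for `x`) and (x_d), relation (s2) is equivalent to
relation (s_2). -/
theorem stmt_8 (K : Type*) [Field K] [CharZero K]
    (L : Type*) [LieRing L] [LieAlgebra K L]
    (x y : ℕ → L)
    (ha : ∀ r s : ℕ, ⁅x (r + 2), x s⁆ + ⁅x (s + 2), x r⁆ = 0)
    (hb : ∀ s r : ℕ, ⁅y (s + 1), x r⁆ = ⁅y s, x (r + 1)⁆) :
    (∀ s r₁ r₂ : ℕ,
      ⁅⁅y s, x (r₁ + 1)⁆, x r₂⁆ + ⁅⁅y s, x r₂⁆, x (r₁ + 1)⁆ +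
      ⁅⁅y s, x (r₂ + 1)⁆, x r₁⁆ + ⁅⁅y s, x r₁⁆, x (r₂ + 1)⁆ = 0) ↔
    (∀ s : ℕ, ⁅⁅y s, x 0⁆, x 1⁆ + ⁅⁅y (s + 1), x 0⁆, x 0⁆ = 0) := by
  have : IsAddTorsionFree L := .of_isTorsionFree K L
  constructor
  · intro hA s
    rw [hb s 0]
    refine eq_of_add_self_eq_add_self ?_
    rw [add_zero, ← hA s 0 0]
    abel
  · intro hB s r₁ r₂
    have hzero (a : ℕ) : ⁅⁅y 0, x a⁆, x 1⁆ + ⁅⁅y 0, x (a + 1)⁆, x 0⁆ = 0 := by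
      simpa only [lie_eq_lie_zero_add hb a, lie_eq_lie_zero_add hb (a + 1), add_zero] using hB a
    have hshift : ∀ a b, ⁅⁅y 0, x (a + 2)⁆, x b⁆ = ⁅⁅y 0, x a⁆, x (b + 2)⁆ :=
      apply_add_two_eq_apply_add_two_of_sum_eq (fun a b => ⁅⁅y 0, x a⁆, x b⁆)
        (lie_lie_add_two_add_lie_lie_add_two ha hb)
    have hsum : ∀ a b, ⁅⁅y 0, x a⁆, x (b + 1)⁆ + ⁅⁅y 0, x (a + 1)⁆, x b⁆ = 0 :=
      apply_add_one_add_apply_eq_zero (fun a b => ⁅⁅y 0, x a⁆, x b⁆) hshift hzero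
    simp only [lie_eq_lie_zero_add hb s, ← Nat.add_assoc]
    linear_combination (norm := abel) hsum (s + r₁) r₂ + hsum (s + r₂) r₁
end

section
/- Let K be a field of characteristic zero, L a Lie algebra over K, and x, y : ℕ → L two families such that ⁅x(a), x(b)⁆ = 0 for all a, b ∈ ℕ and ⁅y(s+1), x(r)⁆ = ⁅y(s), x(r+3)⁆ for all s, r ∈ ℕ. Assume that for all s ∈ ℕ: (t₃') ⁅⁅y(s), x(1)⁆, x(1)⁆ = −2⁅⁅y(s), x(2)⁆, x(0)⁆; (t₃'') 2⁅⁅y(s), x(2)⁆, x(1)⁆ = −⁅⁅y(s+1), x(0)⁆, x(0)⁆; (t₃''') ⁅⁅y(s), x(2)⁆, x(2)⁆ = −2⁅⁅y(s+1), x(1)⁆, x(0)⁆. Then for all s, r₁, r₂ ∈ ℕ, ⁅⁅y(s), x(r₁+2)⁆, x(r₂)⁆ + ⁅⁅y(s), x(r₁+1)⁆, x(r₂+1)⁆ + ⁅⁅y(s), x(r₁)⁆, x(r₂+2)⁆ = 0. -/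
/-!
Write `B s a b = ⁅⁅y s, x a⁆, x b⁆`. Since the `x`'s commute, the Jacobi identity makes `B s`
symmetric in `a, b`, and (x_d) gives `B (s + 1) a b = B s (a + 3) b`. Together these give
`B s a (b + 3) = B s (a + 3) b`, which lets one move a unit from the second index of the sum
in (t̃3) to the first, so only the case `r₂ = 0` remains. There (x_d) also absorbs multiples
of three from `r₁`, and the three residues `r₁ = 0, 1, 2` are exactly (t₃'), (t₃''), (t₃''').
-/

theorem lie_lie_comm_of_lie_eq_zero {L : Type*} [LieRing L] (z : L) {u v : L}
    (h : ⁅u, v⁆ = 0) : ⁅⁅z, u⁆, v⁆ = ⁅⁅z, v⁆, u⁆ := by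
  rw [lie_lie, h, lie_zero, zero_sub, lie_skew]

section T3Sum

variable {V : Type*} [AddCommGroup V] (B : ℕ → ℕ → ℕ → V)

def t3Sum (s a b : ℕ) : V := B s (a + 2) b + B s (a + 1) (b + 1) + B s a (b + 2)

variable {B}

theorem t3Sum_succ (hshift : ∀ s a b, B (s + 1) a b = B s (a + 3) b) (s a b : ℕ) :
    t3Sum B (s + 1) a b = t3Sum B s (a + 3) b := by
  simp only [t3Sum, hshift]

theorem t3Sum_add_three_mul (hshift : ∀ s a b, B (s + 1) a b = B s (a + 3) b) (s a b q : ℕ) :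
    t3Sum B s (a + 3 * q) b = t3Sum B (s + q) a b := by
  induction q generalizing s with
  | zero => rfl
  | succ q ih =>
    rw [show a + 3 * (q + 1) = a + 3 * q + 3 by ring, ← t3Sum_succ hshift, ih (s + 1),
      Nat.add_right_comm, Nat.add_assoc]

theorem t3Sum_succ_right (hsymm : ∀ s a b, B s a b = B s b a)
    (hshift : ∀ s a b, B (s + 1) a b = B s (a + 3) b) (s a b : ℕ) :
    t3Sum B s a (b + 1) = t3Sum B s (a + 1) b := by
  have hthree : B s a (b + 3) = B s (a + 3) b := by
    rw [hsymm, ← hshift, hsymm, hshift]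
  simp only [t3Sum, hthree]
  abel

theorem t3Sum_eq_t3Sum_add_zero (hsymm : ∀ s a b, B s a b = B s b a)
    (hshift : ∀ s a b, B (s + 1) a b = B s (a + 3) b) (s a b : ℕ) :
    t3Sum B s a b = t3Sum B s (a + b) 0 := by
  induction b generalizing a with
  | zero => rfl
  | succ b ih => rw [t3Sum_succ_right hsymm hshift, ih, Nat.add_right_comm, Nat.add_assoc]

theorem t3Sum_eq_zero (hsymm : ∀ s a b, B s a b = B s b a)
    (hshift : ∀ s a b, B (s + 1) a b = B s (a + 3) b)
    (h₀ : ∀ s, B s 1 1 = -(2 • B s 2 0))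
    (h₁ : ∀ s, 2 • B s 2 1 = -B (s + 1) 0 0)
    (h₂ : ∀ s, B s 2 2 = -(2 • B (s + 1) 1 0)) (s a b : ℕ) :
    t3Sum B s a b = 0 := by
  rw [t3Sum_eq_t3Sum_add_zero hsymm hshift, ← Nat.mod_add_div (a + b) 3,
    t3Sum_add_three_mul hshift]
  generalize s + (a + b) / 3 = s
  have hres : (a + b) % 3 < 3 := Nat.mod_lt _ (by norm_num)
  interval_cases (a + b) % 3 <;> simp only [t3Sum, Nat.reduceAdd]
  · rw [hsymm s 0 2]
    linear_combination (norm := module) h₀ s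
  · rw [hsymm s 1 2, ← hshift]
    linear_combination (norm := module) h₁ s
  · rw [← hshift, ← hshift, hsymm (s + 1) 0 1]
    linear_combination (norm := module) h₂ s

end T3Sum

theorem stmt_10_general
    (L : Type*) [LieRing L]
    (x y : ℕ → L)
    (ha : ∀ a b : ℕ, ⁅x a, x b⁆ = 0)
    (hb : ∀ s r : ℕ, ⁅y (s + 1), x r⁆ = ⁅y s, x (r + 3)⁆)
    (ht3' : ∀ s : ℕ, ⁅⁅y s, x 1⁆, x 1⁆ = -(2 • ⁅⁅y s, x 2⁆, x 0⁆))
    (ht3'' : ∀ s : ℕ, 2 • ⁅⁅y s, x 2⁆, x 1⁆ = -⁅⁅y (s + 1), x 0⁆, x 0⁆)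
    (ht3''' : ∀ s : ℕ, ⁅⁅y s, x 2⁆, x 2⁆ = -(2 • ⁅⁅y (s + 1), x 1⁆, x 0⁆)) :
    ∀ s r₁ r₂ : ℕ,
      ⁅⁅y s, x (r₁ + 2)⁆, x r₂⁆ + ⁅⁅y s, x (r₁ + 1)⁆, x (r₂ + 1)⁆ +
      ⁅⁅y s, x r₁⁆, x (r₂ + 2)⁆ = 0 :=
  t3Sum_eq_zero (B := fun s a b => ⁅⁅y s, x a⁆, x b⁆)
    (fun s a b => lie_lie_comm_of_lie_eq_zero (y s) (ha a b))
    (fun s a b => by rw [hb]) ht3' ht3'' ht3'''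

/-- Proposition 7.20 (case `k = 3`, `a_{ij} = −3`, rescaled): under relations (x_{1,2}) and
(x_d), relations (t₃'), (t₃''), (t₃''') imply relation (t̃3). -/
theorem stmt_10 (K : Type*) [Field K] [CharZero K]
    (L : Type*) [LieRing L] [LieAlgebra K L]
    (x y : ℕ → L)
    (ha : ∀ a b : ℕ, ⁅x a, x b⁆ = 0)
    (hb : ∀ s r : ℕ, ⁅y (s + 1), x r⁆ = ⁅y s, x (r + 3)⁆)
    (ht3' : ∀ s : ℕ, ⁅⁅y s, x 1⁆, x 1⁆ = -(2 • ⁅⁅y s, x 2⁆, x 0⁆))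
    (ht3'' : ∀ s : ℕ, 2 • ⁅⁅y s, x 2⁆, x 1⁆ = -⁅⁅y (s + 1), x 0⁆, x 0⁆)
    (ht3''' : ∀ s : ℕ, ⁅⁅y s, x 2⁆, x 2⁆ = -(2 • ⁅⁅y (s + 1), x 1⁆, x 0⁆)) :
    ∀ s r₁ r₂ : ℕ,
      ⁅⁅y s, x (r₁ + 2)⁆, x r₂⁆ + ⁅⁅y s, x (r₁ + 1)⁆, x (r₂ + 1)⁆ +
      ⁅⁅y s, x r₁⁆, x (r₂ + 2)⁆ = 0 :=
  stmt_10_general L x y ha hb ht3' ht3'' ht3'''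
end

section
/- Let K be a field of characteristic zero, L a Lie algebra over K, and x, y : ℕ → L two families such that ⁅x(a), x(b)⁆ = 0 for all a, b ∈ ℕ and ⁅y(s+1), x(r)⁆ = ⁅y(s), x(r+3)⁆ for all s, r ∈ ℕ. Assume for all s ∈ ℕ: ⁅⁅y(s), x(1)⁆, x(1)⁆ = −2⁅⁅y(s), x(2)⁆, x(0)⁆, 2⁅⁅y(s), x(2)⁆, x(1)⁆ = −⁅⁅y(s+1), x(0)⁆, x(0)⁆, ⁅⁅y(s), x(2)⁆, x(2)⁆ = −2⁅⁅y(s+1), x(1)⁆, x(0)⁆, and additionally ⁅⁅⁅y(0), x(1)⁆, x(0)⁆, x(0)⁆ = 0 and ⁅⁅⁅y(0), x(2)⁆, x(0)⁆, x(0)⁆ = 0. Then for all s, r₁, r₂, r₃ ∈ ℕ, the sum over all six permutations σ of {1,2,3} of ⁅⁅⁅y(s), x(r_{σ(1)}+1)⁆, x(r_{σ(2)})⁆, x(r_{σ(3)})⁆ equals 0. -/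
/-!
Since the `x a` commute, the derivations `ad (x a)` commute, so `⁅⁅⁅y s, x a⁆, x b⁆, x c⁆` is
symmetric in `a, b, c`, and by (x_d) raising `s` by one is the same as raising one index by 3.
The symmetrized sum in (u3) is therefore twice `u3Sum y x s r₁ r₂ r₃`, which is cyclically
symmetric and unchanged when 3 is moved from an index to `s`; this reduces (u3) to indices in
`{0, 1, 2}`, hence to finitely many brackets with indices at most 3.

Bracketing (t₃'), (t₃''), (t₃''') with one more `x m` gives linear relations among these. At level
`s + 1` three of them chain to `9 • ⁅⁅⁅y (s + 1), x 0⁆, x 0⁆, x 1⁆ = 0` (likewise with `x 2`), which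
is where characteristic zero is used, while (u₃'), (u₃'') are the case `s = 0`. All the other
brackets then vanish or cancel in pairs.
-/

open Equiv in
theorem sum_perm_fin_three {M : Type*} [AddCommMonoid M] (f : Fin 3 → Fin 3 → Fin 3 → M) :
    ∑ σ : Perm (Fin 3), f (σ 0) (σ 1) (σ 2) =
      f 0 1 2 + f 0 2 1 + f 1 0 2 + f 1 2 0 + f 2 0 1 + f 2 1 0 := by
  rw [show (Finset.univ : Finset (Perm (Fin 3))) =
      {1, swap 1 2, swap 0 1, swap 0 1 * swap 1 2, swap 1 2 * swap 0 1, swap 0 2} by decide]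
  repeat rw [Finset.sum_insert (by decide)]
  simp [swap_apply_of_ne_of_ne, add_assoc]

section
variable {L : Type*} [LieRing L]

theorem lie_lie_right_comm_of_lie_eq_zero_s12 {z u v : L} (h : ⁅u, v⁆ = 0) :
    ⁅⁅z, u⁆, v⁆ = ⁅⁅z, v⁆, u⁆ := by
  rw [lie_lie, h, lie_zero, zero_sub, ← lie_skew, neg_neg]

variable (y x : ℕ → L)

def tripleLie (s a b c : ℕ) : L := ⁅⁅⁅y s, x a⁆, x b⁆, x c⁆

def u3Sum (s a b c : ℕ) : L :=
  tripleLie y x s (a + 1) b c + tripleLie y x s (b + 1) a c + tripleLie y x s (c + 1) a b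

structure T3Relations : Prop where
  one_one : ∀ s, ⁅⁅y s, x 1⁆, x 1⁆ = -(2 • ⁅⁅y s, x 2⁆, x 0⁆)
  two_one : ∀ s, 2 • ⁅⁅y s, x 2⁆, x 1⁆ = -⁅⁅y (s + 1), x 0⁆, x 0⁆
  two_two : ∀ s, ⁅⁅y s, x 2⁆, x 2⁆ = -(2 • ⁅⁅y (s + 1), x 1⁆, x 0⁆)

variable {y x}

theorem tripleLie_swap12 (hx : ∀ a b, ⁅x a, x b⁆ = 0) (s a b c : ℕ) :
    tripleLie y x s a b c = tripleLie y x s b a c := by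
  rw [tripleLie, tripleLie, lie_lie_right_comm_of_lie_eq_zero_s12 (hx a b)]

theorem tripleLie_swap23 (hx : ∀ a b, ⁅x a, x b⁆ = 0) (s a b c : ℕ) :
    tripleLie y x s a b c = tripleLie y x s a c b :=
  lie_lie_right_comm_of_lie_eq_zero_s12 (hx b c)

theorem tripleLie_succ (hy : ∀ s r, ⁅y (s + 1), x r⁆ = ⁅y s, x (r + 3)⁆) (s a b c : ℕ) :
    tripleLie y x (s + 1) a b c = tripleLie y x s (a + 3) b c := by
  rw [tripleLie, tripleLie, hy]

theorem tripleLie_succ_middle (hx : ∀ a b, ⁅x a, x b⁆ = 0)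
    (hy : ∀ s r, ⁅y (s + 1), x r⁆ = ⁅y s, x (r + 3)⁆) (s a b c : ℕ) :
    tripleLie y x (s + 1) a b c = tripleLie y x s a (b + 3) c := by
  rw [tripleLie_swap12 hx, tripleLie_succ hy, tripleLie_swap12 hx]

namespace T3Relations

theorem tripleLie_one_one (ht : T3Relations y x) (s m : ℕ) :
    tripleLie y x s 1 1 m = -(2 • tripleLie y x s 2 0 m) := by
  rw [tripleLie, ht.one_one, neg_lie, nsmul_lie, tripleLie]

theorem tripleLie_two_one (ht : T3Relations y x) (s m : ℕ) :
    2 • tripleLie y x s 2 1 m = -tripleLie y x (s + 1) 0 0 m := by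
  rw [tripleLie, ← nsmul_lie, ht.two_one, neg_lie, tripleLie]

theorem tripleLie_two_two (ht : T3Relations y x) (s m : ℕ) :
    tripleLie y x s 2 2 m = -(2 • tripleLie y x (s + 1) 1 0 m) := by
  rw [tripleLie, ht.two_two, neg_lie, nsmul_lie, tripleLie]

end T3Relations


theorem u3Sum_rotate (hx : ∀ a b, ⁅x a, x b⁆ = 0) (s a b c : ℕ) :
    u3Sum y x s a b c = u3Sum y x s b c a := by
  rw [u3Sum, u3Sum, tripleLie_swap23 hx s (b + 1) c a, tripleLie_swap23 hx s (c + 1) b a]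
  abel

theorem u3Sum_add_three (hx : ∀ a b, ⁅x a, x b⁆ = 0)
    (hy : ∀ s r, ⁅y (s + 1), x r⁆ = ⁅y s, x (r + 3)⁆) (s a b c : ℕ) :
    u3Sum y x s (a + 3) b c = u3Sum y x (s + 1) a b c := by
  rw [u3Sum, u3Sum, tripleLie_succ hy, tripleLie_succ_middle hx hy, tripleLie_succ_middle hx hy,
    Nat.add_right_comm a 3 1]

theorem u3Sum_add_mul_three (hx : ∀ a b, ⁅x a, x b⁆ = 0)
    (hy : ∀ s r, ⁅y (s + 1), x r⁆ = ⁅y s, x (r + 3)⁆) (s a b c k : ℕ) :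
    u3Sum y x s (a + 3 * k) b c = u3Sum y x (s + k) a b c := by
  induction k generalizing s with
  | zero => rfl
  | succ k ih =>
    rw [Nat.mul_succ, ← add_assoc, u3Sum_add_three hx hy, ih, Nat.add_right_comm s 1 k, add_assoc]

section TorsionFree

variable [IsAddTorsionFree L]

theorem tripleLie_zero_zero_one (hx : ∀ a b, ⁅x a, x b⁆ = 0) (ht : T3Relations y x)
    (hu : ⁅⁅⁅y 0, x 1⁆, x 0⁆, x 0⁆ = 0) (s : ℕ) : tripleLie y x s 0 0 1 = 0 := by
  cases s with
  | zero =>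
    have h : tripleLie y x 0 1 0 0 = 0 := hu
    simpa only [tripleLie_swap12 hx, tripleLie_swap23 hx] using h
  | succ s =>
    have e1 := ht.tripleLie_two_one s 1
    have e2 := ht.tripleLie_one_one s 2
    have e3 := ht.tripleLie_two_two s 0
    simp only [tripleLie_swap12 hx, tripleLie_swap23 hx] at e1 e2 e3
    have h9 : 9 • tripleLie y x (s + 1) 0 0 1 = 0 := by
      linear_combination (norm := module) e1 - 2 • e2 + 4 • e3
    exact (nsmul_eq_zero_iff_right (by norm_num)).mp h9

theorem tripleLie_zero_zero_two (hx : ∀ a b, ⁅x a, x b⁆ = 0) (ht : T3Relations y x)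
    (hu : ⁅⁅⁅y 0, x 2⁆, x 0⁆, x 0⁆ = 0) (s : ℕ) : tripleLie y x s 0 0 2 = 0 := by
  cases s with
  | zero =>
    have h : tripleLie y x 0 2 0 0 = 0 := hu
    simpa only [tripleLie_swap12 hx, tripleLie_swap23 hx] using h
  | succ s =>
    have e1 := ht.tripleLie_two_one s 2
    have e2 := ht.tripleLie_two_two s 1
    have e3 := ht.tripleLie_one_one (s + 1) 0
    simp only [tripleLie_swap12 hx, tripleLie_swap23 hx] at e1 e2 e3
    have h9 : 9 • tripleLie y x (s + 1) 0 0 2 = 0 := by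
      linear_combination (norm := module) e1 - 2 • e2 + 4 • e3
    exact (nsmul_eq_zero_iff_right (by norm_num)).mp h9

theorem tripleLie_zero_one_one (hx : ∀ a b, ⁅x a, x b⁆ = 0) (ht : T3Relations y x)
    (hu : ⁅⁅⁅y 0, x 2⁆, x 0⁆, x 0⁆ = 0) (s : ℕ) : tripleLie y x s 0 1 1 = 0 := by
  simpa only [tripleLie_swap12 hx, tripleLie_swap23 hx, tripleLie_zero_zero_two hx ht hu,
    smul_zero, neg_zero] using ht.tripleLie_one_one s 0

theorem tripleLie_zero_two_two (hx : ∀ a b, ⁅x a, x b⁆ = 0) (ht : T3Relations y x)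
    (hu : ⁅⁅⁅y 0, x 1⁆, x 0⁆, x 0⁆ = 0) (s : ℕ) : tripleLie y x s 0 2 2 = 0 := by
  simpa only [tripleLie_swap12 hx, tripleLie_swap23 hx, tripleLie_zero_zero_one hx ht hu,
    smul_zero, neg_zero] using ht.tripleLie_two_two s 0

theorem tripleLie_one_one_two (hx : ∀ a b, ⁅x a, x b⁆ = 0) (ht : T3Relations y x)
    (hu : ⁅⁅⁅y 0, x 1⁆, x 0⁆, x 0⁆ = 0) (s : ℕ) : tripleLie y x s 1 1 2 = 0 := by
  simpa only [tripleLie_swap12 hx, tripleLie_swap23 hx, tripleLie_zero_two_two hx ht hu,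
    smul_zero, neg_zero] using ht.tripleLie_one_one s 2

theorem tripleLie_one_two_two (hx : ∀ a b, ⁅x a, x b⁆ = 0) (ht : T3Relations y x)
    (hu : ⁅⁅⁅y 0, x 2⁆, x 0⁆, x 0⁆ = 0) (s : ℕ) : tripleLie y x s 1 2 2 = 0 := by
  simpa only [tripleLie_swap12 hx, tripleLie_swap23 hx, tripleLie_zero_one_one hx ht hu,
    smul_zero, neg_zero] using ht.tripleLie_two_two s 1

theorem u3Sum_eq_zero_of_lt_three (hx : ∀ a b, ⁅x a, x b⁆ = 0)
    (hy : ∀ s r, ⁅y (s + 1), x r⁆ = ⁅y s, x (r + 3)⁆) (ht : T3Relations y x)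
    (hu₁ : ⁅⁅⁅y 0, x 1⁆, x 0⁆, x 0⁆ = 0) (hu₂ : ⁅⁅⁅y 0, x 2⁆, x 0⁆, x 0⁆ = 0)
    {a b c : ℕ} (ha : a < 3) (hb : b < 3) (hc : c < 3) (s : ℕ) : u3Sum y x s a b c = 0 := by
  have h111 := ht.tripleLie_one_one s 1
  have h000 := ht.tripleLie_two_one s 0
  have h222 := ht.tripleLie_two_two s 2
  have hshift (b c : ℕ) : tripleLie y x s b c 3 = tripleLie y x (s + 1) 0 b c := by
    rw [tripleLie_succ hy, zero_add, tripleLie_swap23 hx s b, tripleLie_swap12 hx s b]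
  -- As permutative rewrite rules, the two symmetries sort the indices increasingly; every
  -- relation used below is stated in that normal form.
  simp only [tripleLie_swap12 hx, tripleLie_swap23 hx] at h111 h000 h222
  rw [← neg_eq_iff_eq_neg, eq_comm] at h000
  interval_cases a <;> interval_cases b <;> interval_cases c <;>
    simp only [u3Sum, Nat.reduceAdd, tripleLie_swap12 hx, tripleLie_swap23 hx, hshift,
      h111, h000, h222,
      tripleLie_zero_zero_one hx ht hu₁, tripleLie_zero_zero_two hx ht hu₂,
      tripleLie_zero_one_one hx ht hu₂, tripleLie_zero_two_two hx ht hu₁,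
      tripleLie_one_one_two hx ht hu₁, tripleLie_one_two_two hx ht hu₂] <;> module

theorem u3Sum_eq_zero (hx : ∀ a b, ⁅x a, x b⁆ = 0)
    (hy : ∀ s r, ⁅y (s + 1), x r⁆ = ⁅y s, x (r + 3)⁆) (ht : T3Relations y x)
    (hu₁ : ⁅⁅⁅y 0, x 1⁆, x 0⁆, x 0⁆ = 0) (hu₂ : ⁅⁅⁅y 0, x 2⁆, x 0⁆, x 0⁆ = 0)
    (s a b c : ℕ) : u3Sum y x s a b c = 0 := by
  rw [← Nat.mod_add_div a 3, u3Sum_add_mul_three hx hy, u3Sum_rotate hx,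
    ← Nat.mod_add_div b 3, u3Sum_add_mul_three hx hy, u3Sum_rotate hx,
    ← Nat.mod_add_div c 3, u3Sum_add_mul_three hx hy]
  exact u3Sum_eq_zero_of_lt_three hx hy ht hu₁ hu₂ (Nat.mod_lt _ three_pos)
    (Nat.mod_lt _ three_pos) (Nat.mod_lt _ three_pos) _

end TorsionFree

theorem sum_perm_tripleLie_eq_two_nsmul_u3Sum (hx : ∀ a b, ⁅x a, x b⁆ = 0) (s : ℕ)
    (r : Fin 3 → ℕ) :
    ∑ σ : Equiv.Perm (Fin 3), tripleLie y x s (r (σ 0) + 1) (r (σ 1)) (r (σ 2)) =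
      2 • u3Sum y x s (r 0) (r 1) (r 2) := by
  rw [sum_perm_fin_three (fun i j k => tripleLie y x s (r i + 1) (r j) (r k)), u3Sum,
    tripleLie_swap23 hx s (r 0 + 1) (r 2), tripleLie_swap23 hx s (r 1 + 1) (r 2),
    tripleLie_swap23 hx s (r 2 + 1) (r 1)]
  abel

end

/-- Proposition 7.24 (case `k = 3`, `a_{ij} = −3`, rescaled): relations (x_{1,2}), (x_d),
(t₃'), (t₃''), (t₃'''), (u₃'), (u₃'') imply relation (u3): for all `s` and `r₁, r₂, r₃`,
the sum over all six permutations `σ` of `{1,2,3}` of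
`⁅⁅⁅y s, x (r_{σ(1)}+1)⁆, x (r_{σ(2)})⁆, x (r_{σ(3)})⁆` vanishes. -/
theorem stmt_12 (K : Type*) [Field K] [CharZero K]
    (L : Type*) [LieRing L] [LieAlgebra K L]
    (x y : ℕ → L)
    (ha : ∀ a b : ℕ, ⁅x a, x b⁆ = 0)
    (hb : ∀ s r : ℕ, ⁅y (s + 1), x r⁆ = ⁅y s, x (r + 3)⁆)
    (ht3' : ∀ s : ℕ, ⁅⁅y s, x 1⁆, x 1⁆ = -(2 • ⁅⁅y s, x 2⁆, x 0⁆))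
    (ht3'' : ∀ s : ℕ, 2 • ⁅⁅y s, x 2⁆, x 1⁆ = -⁅⁅y (s + 1), x 0⁆, x 0⁆)
    (ht3''' : ∀ s : ℕ, ⁅⁅y s, x 2⁆, x 2⁆ = -(2 • ⁅⁅y (s + 1), x 1⁆, x 0⁆))
    (hu3' : ⁅⁅⁅y 0, x 1⁆, x 0⁆, x 0⁆ = 0)
    (hu3'' : ⁅⁅⁅y 0, x 2⁆, x 0⁆, x 0⁆ = 0) :
    ∀ (s : ℕ) (r : Fin 3 → ℕ),
      ∑ σ : Equiv.Perm (Fin 3),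
        ⁅⁅⁅y s, x (r (σ 0) + 1)⁆, x (r (σ 1))⁆, x (r (σ 2))⁆ = 0 := by
  have : IsAddTorsionFree L := .of_isTorsionFree K L
  intro s r
  calc _ = 2 • u3Sum y x s (r 0) (r 1) (r 2) := sum_perm_tripleLie_eq_two_nsmul_u3Sum ha s r
    _ = 0 := by rw [u3Sum_eq_zero ha hb ⟨ht3', ht3'', ht3'''⟩ hu3' hu3'', smul_zero]
end

section
/- Let K be a field of characteristic zero, L a Lie algebra over K, m ≥ 1 a natural number, and x, y : ℕ → L two families such that: (a) ⁅x(a), x(b)⁆ = 0 for all a, b ∈ ℕ; (b) ⁅y(s+1), x(r)⁆ = ⁅y(s), x(r+1)⁆ for all s, r ∈ ℕ; and (c) (ad x(0))^m (y(s)) = 0 for all s ∈ ℕ. Then for all s ∈ ℕ and all r₁, …, r_m ∈ ℕ, the iterated bracket ⁅…⁅⁅y(s), x(r₁)⁆, x(r₂)⁆, …, x(r_m)⁆ equals 0. -/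
/-!
Since the `x a` commute, right brackets with them commute with each other, and relation (b) lets
one move indices from the `x`'s onto `y`. So the iterated bracket equals
`⁅…⁅y (s + r₁ + ⋯ + r_m), x 0⁆, …, x 0⁆ = (-ad (x 0))^m (y (s + r₁ + ⋯ + r_m))`,
which vanishes by the Serre relation.
-/

theorem apply_eq_apply_add_zero {α : Type*} (f : ℕ → ℕ → α)
    (h : ∀ s r, f (s + 1) r = f s (r + 1)) (s r : ℕ) : f s r = f (s + r) 0 := by
  induction r generalizing s with
  | zero => rfl
  | succ r ih => rw [← h, ih, Nat.add_right_comm, Nat.add_assoc]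

section LieRing

variable {L : Type*} [LieRing L]

theorem lie_lie_right_comm {a b : L} (h : ⁅a, b⁆ = 0) (z : L) :
    ⁅⁅z, a⁆, b⁆ = ⁅⁅z, b⁆, a⁆ := by
  have := leibniz_lie a z b
  rw [h, lie_zero, add_zero] at this
  rw [← lie_skew z a, neg_lie, ← this, ← lie_skew ⁅z, b⁆ a]

theorem foldl_lie_lie_comm {ι : Type*} (x : ι → L) {v : L} (hv : ∀ i, ⁅v, x i⁆ = 0)
    (l : List ι) (z : L) :
    l.foldl (fun w i => ⁅w, x i⁆) ⁅z, v⁆ = ⁅l.foldl (fun w i => ⁅w, x i⁆) z, v⁆ := by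
  induction l generalizing z with
  | nil => rfl
  | cons i t ih => rw [List.foldl_cons, List.foldl_cons, lie_lie_right_comm (hv i), ih]

theorem foldl_lie_eq_foldl_lie_replicate_zero {x y : ℕ → L} (hx : ∀ a b, ⁅x a, x b⁆ = 0)
    (hxy : ∀ s r, ⁅y (s + 1), x r⁆ = ⁅y s, x (r + 1)⁆) (l : List ℕ) (s : ℕ) :
    l.foldl (fun w i => ⁅w, x i⁆) (y s) =
      (List.replicate l.length 0).foldl (fun w i => ⁅w, x i⁆) (y (s + l.sum)) := by
  have hshift : ∀ s r, ⁅y s, x r⁆ = ⁅y (s + r), x 0⁆ :=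
    apply_eq_apply_add_zero (fun s r => ⁅y s, x r⁆) hxy
  induction l generalizing s with
  | nil => rfl
  | cons a t ih =>
    calc (a :: t).foldl (fun w i => ⁅w, x i⁆) (y s)
        = ⁅t.foldl (fun w i => ⁅w, x i⁆) (y s), x a⁆ := foldl_lie_lie_comm x (hx a) t (y s)
      _ = (List.replicate t.length 0).foldl (fun w i => ⁅w, x i⁆) ⁅y (s + t.sum), x a⁆ := by
        rw [ih, foldl_lie_lie_comm x (hx a)]
      _ = _ := by
        rw [hshift, List.length_cons, List.replicate_succ, List.foldl_cons, List.sum_cons,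
          Nat.add_assoc, Nat.add_comm t.sum]

end LieRing

theorem foldl_lie_replicate {R L ι : Type*} [CommRing R] [LieRing L] [LieAlgebra R L]
    (x : ι → L) (i : ι) (n : ℕ) (z : L) :
    (List.replicate n i).foldl (fun w j => ⁅w, x j⁆) z = ((-LieAlgebra.ad R L (x i)) ^ n) z := by
  induction n generalizing z with
  | zero => rfl
  | succ n ih =>
    rw [List.replicate_succ, List.foldl_cons, ih, pow_succ, Module.End.mul_apply,
      LinearMap.neg_apply, LieAlgebra.ad_apply, lie_skew]

theorem stmt_13_general (K : Type*) [Field K]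
    (L : Type*) [LieRing L] [LieAlgebra K L]
    (m : ℕ) (x y : ℕ → L)
    (ha : ∀ a b : ℕ, ⁅x a, x b⁆ = 0)
    (hb : ∀ s r : ℕ, ⁅y (s + 1), x r⁆ = ⁅y s, x (r + 1)⁆)
    (hserre : ∀ s : ℕ, ((LieAlgebra.ad K L (x 0)) ^ m) (y s) = 0) :
    ∀ (s : ℕ) (r : List ℕ), r.length = m →
      r.foldl (fun z i => ⁅z, x i⁆) (y s) = 0 := by
  intro s r hr
  rw [foldl_lie_eq_foldl_lie_replicate_zero ha hb, foldl_lie_replicate (R := K) x, hr, neg_pow,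
    Module.End.mul_apply, hserre, map_zero]

/-- Proposition 7.27 (generic untwisted case): if all brackets `⁅x a, x b⁆` vanish,
`⁅y (s+1), x r⁆ = ⁅y s, x (r+1)⁆`, and the Serre relation `(ad x 0)^m (y s) = 0` holds,
then every iterated bracket `⁅…⁅⁅y s, x r₁⁆, x r₂⁆, …, x r_m⁆` of length `m` vanishes. -/
theorem stmt_13 (K : Type*) [Field K] [CharZero K]
    (L : Type*) [LieRing L] [LieAlgebra K L]
    (m : ℕ) (hm : 1 ≤ m) (x y : ℕ → L)
    (ha : ∀ a b : ℕ, ⁅x a, x b⁆ = 0)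
    (hb : ∀ s r : ℕ, ⁅y (s + 1), x r⁆ = ⁅y s, x (r + 1)⁆)
    (hserre : ∀ s : ℕ, ((LieAlgebra.ad K L (x 0)) ^ m) (y s) = 0) :
    ∀ (s : ℕ) (r : List ℕ), r.length = m →
      r.foldl (fun z i => ⁅z, x i⁆) (y s) = 0 :=
  stmt_13_general K L m x y ha hb hserre
end

section
/- Let K be a field of characteristic zero, L a Lie algebra over K, and x, y : ℕ → L two families such that ⁅x(a), x(b)⁆ = 0 for all a, b ∈ ℕ and ⁅y(s+1), x(r)⁆ = ⁅y(s), x(r+2)⁆ for all s, r ∈ ℕ. Assume that for all s ∈ ℕ: ⁅⁅y(s), x(1)⁆, x(0)⁆ = 0 and ⁅⁅y(s), x(1)⁆, x(1)⁆ + ⁅⁅y(s+1), x(0)⁆, x(0)⁆ = 0. Then for every s ≥ 1 one has ⁅⁅⁅y(s), x(0)⁆, x(0)⁆, x(0)⁆ = 0. -/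
theorem lie_lie_eq_zero_of_lie_eq_zero {L : Type*} [LieRing L] {a u v : L}
    (hav : ⁅a, v⁆ = 0) (huv : ⁅u, v⁆ = 0) : ⁅⁅a, u⁆, v⁆ = 0 := by
  rw [lie_lie, hav, huv, lie_zero, lie_zero, sub_zero]

theorem stmt_14_general
    (L : Type*) [LieRing L]
    (x y : ℕ → L)
    (ha : ∀ a b : ℕ, ⁅x a, x b⁆ = 0)
    (ht2' : ∀ s : ℕ, ⁅⁅y s, x 1⁆, x 0⁆ = 0)
    (ht2'' : ∀ s : ℕ, ⁅⁅y s, x 1⁆, x 1⁆ + ⁅⁅y (s + 1), x 0⁆, x 0⁆ = 0) :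
    ∀ s : ℕ, 1 ≤ s → ⁅⁅⁅y s, x 0⁆, x 0⁆, x 0⁆ = 0 := by
  rintro s hs
  obtain ⟨t, rfl⟩ : ∃ t, s = t + 1 := Nat.exists_eq_add_of_le' hs
  have h := congrArg (⁅·, x 0⁆) (ht2'' t)
  rwa [add_lie, lie_lie_eq_zero_of_lie_eq_zero (ht2' t) (ha 1 0), zero_add, zero_lie] at h

/-- Remark 7.28, case `k = 2`, `a_{ij} = −2`, `X_{ñ}^{(k)} ≠ A_{2n}^{(2)}` (rescaled):
relations (x_{1,2}), (x_d), (t₂'), (t₂'') imply the Serre relation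
`⁅⁅⁅y s, x 0⁆, x 0⁆, x 0⁆ = 0` for all `s ≥ 1`. -/
theorem stmt_14 (K : Type*) [Field K] [CharZero K]
    (L : Type*) [LieRing L] [LieAlgebra K L]
    (x y : ℕ → L)
    (ha : ∀ a b : ℕ, ⁅x a, x b⁆ = 0)
    (hb : ∀ s r : ℕ, ⁅y (s + 1), x r⁆ = ⁅y s, x (r + 2)⁆)
    (ht2' : ∀ s : ℕ, ⁅⁅y s, x 1⁆, x 0⁆ = 0)
    (ht2'' : ∀ s : ℕ, ⁅⁅y s, x 1⁆, x 1⁆ + ⁅⁅y (s + 1), x 0⁆, x 0⁆ = 0) :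
    ∀ s : ℕ, 1 ≤ s → ⁅⁅⁅y s, x 0⁆, x 0⁆, x 0⁆ = 0 :=
  stmt_14_general L x y ha ht2' ht2''
end

section
/- Let n ∈ ℕ and let A : Fin n → Fin n → ℤ satisfy A i i = 2 for all i and A i j ≤ 0 for all i ≠ j. Let g̃ be the Lie algebra over ℂ presented by generators e i, f i, h i (i ∈ Fin n) with relations ⁅h i, h j⁆ = 0, ⁅h i, e j⁆ = (A i j) • e j, ⁅h i, f j⁆ = −(A i j) • f j, and ⁅e i, f j⁆ = δ_{ij} h i (i.e., the quotient of the free Lie algebra on these 3n generators by the Lie ideal generated by the corresponding elements). Let M be a g̃-module such that: (1) M is spanned by weight vectors, i.e., by vectors m for which there exists α : Fin n → ℂ with (h i) • m = (α i) • m for all i; and (2) for every i, the endomorphisms of M given by the actions of e i and of f i are locally nilpotent (for every m ∈ M there is N with (e i)^N • m = 0, and likewise for f i). Then for all i ≠ j, the elements (ad (e i))^{1 − A i j}(e j) and (ad (f i))^{1 − A i j}(f j) of g̃ act as zero on M. -/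
/-!
Let `(e, h, f)` satisfy `⁅e, f⁆ = h`, `⁅h, f⁆ = -2 f`, and let `x` satisfy `⁅e, x⁆ = 0`,
`⁅h, x⁆ = l x`. The elements `y k = (ad f)^k x` then obey `⁅e, y (k+1)⁆ = (k+1)(l-k) • y k`.
Since `f` acts locally nilpotently, expanding `(ad f)^k` shows that `y k` kills any given
vector for `k` large; since `e` acts locally nilpotently, the `e`-orbit of a vector `m` is
finite, so for large `k` the element `y k` kills the whole orbit. The coefficient
`(k+1)(l-k)` is nonzero for `k > l`, so the identity above carries this vanishing down to
`k = l + 1`. For `g̃₀` apply this to `(e i, h i, f i)` with `x = f j`, and to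
`(f i, -h i, e i)` with `x = e j`, where `l = -A i j`.
-/

/-- Generators `e i`, `f i`, `h i` of the Lie algebra `g̃₀` of Definition 8.12. -/
inductive ChevGen (n : ℕ) : Type
  | e : Fin n → ChevGen n
  | f : Fin n → ChevGen n
  | h : Fin n → ChevGen n

/-- The generator `e i` inside the free Lie algebra. -/
noncomputable def genE {n : ℕ} (i : Fin n) : FreeLieAlgebra ℂ (ChevGen n) :=
  FreeLieAlgebra.of ℂ (ChevGen.e i)

/-- The generator `f i` inside the free Lie algebra. -/
noncomputable def genF {n : ℕ} (i : Fin n) : FreeLieAlgebra ℂ (ChevGen n) :=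
  FreeLieAlgebra.of ℂ (ChevGen.f i)

/-- The generator `h i` inside the free Lie algebra. -/
noncomputable def genH {n : ℕ} (i : Fin n) : FreeLieAlgebra ℂ (ChevGen n) :=
  FreeLieAlgebra.of ℂ (ChevGen.h i)

/-- The defining relations of `g̃₀`: `⁅h i, h j⁆ = 0`, `⁅h i, e j⁆ = A i j • e j`,
`⁅h i, f j⁆ = − A i j • f j`, `⁅e i, f j⁆ = δ_{ij} h i`. -/
def chevRels (n : ℕ) (A : Fin n → Fin n → ℤ) : Set (FreeLieAlgebra ℂ (ChevGen n)) :=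
  (Set.range fun p : Fin n × Fin n => ⁅genH p.1, genH p.2⁆) ∪
  (Set.range fun p : Fin n × Fin n => ⁅genH p.1, genE p.2⁆ - A p.1 p.2 • genE p.2) ∪
  (Set.range fun p : Fin n × Fin n => ⁅genH p.1, genF p.2⁆ + A p.1 p.2 • genF p.2) ∪
  (Set.range fun p : Fin n × Fin n =>
    ⁅genE p.1, genF p.2⁆ - if p.1 = p.2 then genH p.1 else 0)

/-- The Lie ideal generated by the relations. -/
noncomputable abbrev chevIdeal (n : ℕ) (A : Fin n → Fin n → ℤ) :
    LieIdeal ℂ (FreeLieAlgebra ℂ (ChevGen n)) :=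
  LieSubmodule.lieSpan ℂ (FreeLieAlgebra ℂ (ChevGen n)) (chevRels n A)

/-- The presented Lie algebra `g̃₀` (Definition 8.12): the quotient of the free Lie algebra
on the generators `e i`, `f i`, `h i` by the Lie ideal generated by the relations. -/
noncomputable abbrev gTilde (n : ℕ) (A : Fin n → Fin n → ℤ) : Type :=
  FreeLieAlgebra ℂ (ChevGen n) ⧸ chevIdeal n A

/-- The image of `e i` in `g̃₀`. -/
noncomputable def eQ {n : ℕ} (A : Fin n → Fin n → ℤ) (i : Fin n) : gTilde n A :=
  LieSubmodule.Quotient.mk' (chevIdeal n A) (genE i)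

/-- The image of `f i` in `g̃₀`. -/
noncomputable def fQ {n : ℕ} (A : Fin n → Fin n → ℤ) (i : Fin n) : gTilde n A :=
  LieSubmodule.Quotient.mk' (chevIdeal n A) (genF i)

/-- The image of `h i` in `g̃₀`. -/
noncomputable def hQ {n : ℕ} (A : Fin n → Fin n → ℤ) (i : Fin n) : gTilde n A :=
  LieSubmodule.Quotient.mk' (chevIdeal n A) (genH i)

open LieAlgebra LieModule

section Sl2

variable {K L M : Type*} [CommRing K] [LieRing L] [LieAlgebra K L]
  [AddCommGroup M] [Module K M] [LieRingModule L M] [LieModule K L M]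

lemma lie_ad_pow_eq_smul {f h x : L} {l : K}
    (hhf : ⁅h, f⁆ = (-2 : K) • f) (hhx : ⁅h, x⁆ = l • x) (k : ℕ) :
    ⁅h, (ad K L f ^ k) x⁆ = (l - 2 * k) • (ad K L f ^ k) x := by
  induction k with
  | zero => simpa using hhx
  | succ k ih =>
    rw [pow_succ', Module.End.mul_apply, ad_apply, leibniz_lie, hhf, ih, smul_lie, lie_smul,
      ← add_smul]
    congr 1
    push_cast
    ring

lemma lie_ad_pow_succ_eq_smul {e f h x : L} {l : K} (hef : ⁅e, f⁆ = h)
    (hhf : ⁅h, f⁆ = (-2 : K) • f) (hex : ⁅e, x⁆ = 0) (hhx : ⁅h, x⁆ = l • x) (k : ℕ) :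
    ⁅e, (ad K L f ^ (k + 1)) x⁆ = ((k + 1) * (l - k)) • (ad K L f ^ k) x := by
  induction k with
  | zero => simp [leibniz_lie, hef, hex, hhx]
  | succ k ih =>
    rw [pow_succ' _ (k + 1), Module.End.mul_apply, ad_apply, leibniz_lie, hef, ih,
      lie_ad_pow_eq_smul hhf hhx, lie_smul, ← ad_apply K, ← Module.End.mul_apply,
      ← pow_succ', ← add_smul]
    congr 1
    push_cast
    ring

lemma lie_ad_pow_lie_mem_span (f x : L) (k : ℕ) (u : M) :
    ⁅(ad K L f ^ k) x, u⁆ ∈ Submodule.span K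
      {w | ∃ q r, q + r = k ∧ w = (toEnd K L M f ^ q) ⁅x, (toEnd K L M f ^ r) u⁆} := by
  induction k generalizing u with
  | zero => exact Submodule.subset_span ⟨0, 0, rfl, by simp⟩
  | succ k ih =>
    rw [pow_succ', Module.End.mul_apply, ad_apply, lie_lie]
    refine sub_mem ?_ ?_
    · have := Submodule.mem_map_of_mem (f := toEnd K L M f) (ih u)
      rw [Submodule.map_span] at this
      refine Submodule.span_mono ?_ this
      rintro _ ⟨_, ⟨q, r, hqr, rfl⟩, rfl⟩
      exact ⟨q + 1, r, by omega, by rw [pow_succ', Module.End.mul_apply]⟩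
    · refine Submodule.span_mono ?_ (ih ⁅f, u⁆)
      rintro _ ⟨q, r, hqr, rfl⟩
      exact ⟨q, r + 1, by omega, by rw [pow_succ, Module.End.mul_apply, toEnd_apply_apply]⟩

lemma exists_forall_ge_lie_ad_pow_lie_eq_zero {f : L}
    (hf : ∀ m : M, ∃ N : ℕ, (toEnd K L M f ^ N) m = 0) (x : L) (u : M) :
    ∃ P, ∀ k ≥ P, ⁅(ad K L f ^ k) x, u⁆ = 0 := by
  obtain ⟨d, hd⟩ := hf u
  choose g hg using fun r : ℕ => hf ⁅x, (toEnd K L M f ^ r) u⁆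
  refine ⟨d + (Finset.range d).sup g, fun k hk ↦ ?_⟩
  suffices h : {w | ∃ q r, q + r = k ∧ w = (toEnd K L M f ^ q) ⁅x, (toEnd K L M f ^ r) u⁆}
      ⊆ {0} by
    simpa using Submodule.span_mono h (lie_ad_pow_lie_mem_span f x k u)
  rintro _ ⟨q, r, rfl, rfl⟩
  rcases lt_or_ge r d with hr | hr
  · have hgr : g r ≤ q := (Finset.le_sup (Finset.mem_range.mpr hr)).trans (by omega)
    rw [Set.mem_singleton_iff, ← Nat.sub_add_cancel hgr, pow_add, Module.End.mul_apply, hg,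
      map_zero]
  · rw [Set.mem_singleton_iff, ← Nat.sub_add_cancel hr, pow_add, Module.End.mul_apply, hd,
      map_zero, lie_zero, map_zero]

lemma exists_forall_ge_lie_ad_pow_lie_toEnd_pow_eq_zero {e f : L}
    (he : ∀ m : M, ∃ N : ℕ, (toEnd K L M e ^ N) m = 0)
    (hf : ∀ m : M, ∃ N : ℕ, (toEnd K L M f ^ N) m = 0) (x : L) (m : M) :
    ∃ P, ∀ k ≥ P, ∀ b, ⁅(ad K L f ^ k) x, (toEnd K L M e ^ b) m⁆ = 0 := by
  obtain ⟨B, hB⟩ := he m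
  choose P hP using fun b : ℕ ↦
    exists_forall_ge_lie_ad_pow_lie_eq_zero hf x ((toEnd K L M e ^ b) m)
  refine ⟨(Finset.range B).sup P, fun k hk b ↦ ?_⟩
  rcases lt_or_ge b B with hb | hb
  · exact hP b k ((Finset.le_sup (Finset.mem_range.mpr hb)).trans hk)
  · rw [← Nat.sub_add_cancel hb, pow_add, Module.End.mul_apply, hB, map_zero, lie_zero]

end Sl2

section Sl2Field

variable {K L M : Type*} [Field K] [LieRing L] [LieAlgebra K L]
  [AddCommGroup M] [Module K M] [LieRingModule L M] [LieModule K L M]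

lemma lie_toEnd_pow_eq_zero_of_lie_eq_smul {e y y' : L} {c : K} (hc : c ≠ 0)
    (hey : ⁅e, y'⁆ = c • y) {m : M} (hy' : ∀ b, ⁅y', (toEnd K L M e ^ b) m⁆ = 0) (b : ℕ) :
    ⁅y, (toEnd K L M e ^ b) m⁆ = 0 := by
  have hsucc : ⁅e, (toEnd K L M e ^ b) m⁆ = (toEnd K L M e ^ (b + 1)) m := by
    rw [pow_succ', Module.End.mul_apply, toEnd_apply_apply]
  have : c • ⁅y, (toEnd K L M e ^ b) m⁆ = 0 := by
    rw [← smul_lie, ← hey, lie_lie, hy', lie_zero, hsucc, hy', sub_zero]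
  exact (smul_eq_zero.mp this).resolve_left hc

theorem lie_ad_pow_succ_lie_eq_zero [CharZero K] {e f h x : L} {l : ℕ} (hef : ⁅e, f⁆ = h)
    (hhf : ⁅h, f⁆ = (-2 : K) • f) (hex : ⁅e, x⁆ = 0) (hhx : ⁅h, x⁆ = (l : K) • x)
    (he : ∀ m : M, ∃ N : ℕ, (toEnd K L M e ^ N) m = 0)
    (hf : ∀ m : M, ∃ N : ℕ, (toEnd K L M f ^ N) m = 0) (m : M) :
    ⁅(ad K L f ^ (l + 1)) x, m⁆ = 0 := by
  obtain ⟨P, hP⟩ := exists_forall_ge_lie_ad_pow_lie_toEnd_pow_eq_zero he hf x m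
  suffices horbit : ∀ b, ⁅(ad K L f ^ (l + 1)) x, (toEnd K L M e ^ b) m⁆ = 0 by
    simpa using horbit 0
  refine Nat.decreasingInduction'
    (P := fun k ↦ ∀ b, ⁅(ad K L f ^ k) x, (toEnd K L M e ^ b) m⁆ = 0) (fun k _ hlk ih ↦ ?_)
    (Nat.le_add_left (l + 1) P) (hP _ (Nat.le_add_right P (l + 1)))
  have hc : ((k + 1) * ((l : K) - k)) ≠ 0 := by
    refine mul_ne_zero (Nat.cast_add_one_ne_zero k) (sub_ne_zero.mpr ?_)
    exact_mod_cast (by omega : l ≠ k)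
  exact lie_toEnd_pow_eq_zero_of_lie_eq_smul hc (lie_ad_pow_succ_eq_smul hef hhf hex hhx k) ih

end Sl2Field

section Relations

variable {n : ℕ} (A : Fin n → Fin n → ℤ)

lemma mk'_eq_zero_of_mem_chevRels {x : FreeLieAlgebra ℂ (ChevGen n)}
    (hx : x ∈ chevRels n A) : LieSubmodule.Quotient.mk' (chevIdeal n A) x = 0 :=
  (LieSubmodule.Quotient.mk_eq_zero _).mpr (LieSubmodule.subset_lieSpan hx)

lemma lie_hQ_eQ (i j : Fin n) : ⁅hQ A i, eQ A j⁆ = (A i j : ℂ) • eQ A j := by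
  have := mk'_eq_zero_of_mem_chevRels A (.inl (.inl (.inr ⟨(i, j), rfl⟩)))
  rwa [map_sub, sub_eq_zero, map_zsmul, ← Int.cast_smul_eq_zsmul ℂ] at this

lemma lie_hQ_fQ (i j : Fin n) : ⁅hQ A i, fQ A j⁆ = -((A i j : ℂ) • fQ A j) := by
  have := mk'_eq_zero_of_mem_chevRels A (.inl (.inr ⟨(i, j), rfl⟩))
  rwa [map_add, add_eq_zero_iff_eq_neg, map_zsmul, ← Int.cast_smul_eq_zsmul ℂ] at this

lemma lie_eQ_fQ (i j : Fin n) : ⁅eQ A i, fQ A j⁆ = if i = j then hQ A i else 0 := by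
  have := mk'_eq_zero_of_mem_chevRels A (.inr ⟨(i, j), rfl⟩)
  rwa [map_sub, sub_eq_zero, apply_ite (LieSubmodule.Quotient.mk' _), map_zero] at this

end Relations

theorem stmt_16_general (n : ℕ) (A : Fin n → Fin n → ℤ)
    (hdiag : ∀ i, A i i = 2) (hoff : ∀ i j, i ≠ j → A i j ≤ 0)
    (M : Type*) [AddCommGroup M] [Module ℂ M]
    [LieRingModule (gTilde n A) M] [LieModule ℂ (gTilde n A) M]
    (hniE : ∀ (i : Fin n) (m : M), ∃ N : ℕ,
      ((LieModule.toEnd ℂ (gTilde n A) M (eQ A i)) ^ N) m = 0)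
    (hniF : ∀ (i : Fin n) (m : M), ∃ N : ℕ,
      ((LieModule.toEnd ℂ (gTilde n A) M (fQ A i)) ^ N) m = 0) :
    ∀ i j : Fin n, i ≠ j →
      (∀ m : M, ⁅((LieAlgebra.ad ℂ (gTilde n A) (eQ A i)) ^ (1 - A i j).toNat) (eQ A j), m⁆
        = 0) ∧
      (∀ m : M, ⁅((LieAlgebra.ad ℂ (gTilde n A) (fQ A i)) ^ (1 - A i j).toNat) (fQ A j), m⁆
        = 0) := by
  intro i j hij
  obtain ⟨l, hl⟩ : ∃ l : ℕ, (l : ℤ) = -A i j :=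
    ⟨_, Int.toNat_of_nonneg (by linarith [hoff i j hij])⟩
  have hpow : (1 - A i j).toNat = l + 1 := by omega
  have hlC : (l : ℂ) = -(A i j : ℂ) := by exact_mod_cast hl
  have hdiagC : (A i i : ℂ) = 2 := by simp [hdiag]
  have hef : ⁅eQ A i, fQ A i⁆ = hQ A i := by simpa using lie_eQ_fQ A i i
  rw [hpow]
  constructor
  · refine lie_ad_pow_succ_lie_eq_zero (h := -hQ A i) ?_ ?_ ?_ ?_ (hniF i) (hniE i)
    · rw [← lie_skew, hef]
    · rw [neg_lie, lie_hQ_eQ, hdiagC, neg_smul]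
    · rw [← lie_skew, lie_eQ_fQ, if_neg (Ne.symm hij), neg_zero]
    · rw [neg_lie, lie_hQ_eQ, hlC, neg_smul]
  · refine lie_ad_pow_succ_lie_eq_zero hef ?_ ?_ ?_ (hniE i) (hniF i)
    · rw [lie_hQ_fQ, hdiagC, neg_smul]
    · rw [lie_eQ_fQ, if_neg hij]
    · rw [lie_hQ_fQ, hlC, neg_smul]

/-- Lemma 8.14: let `A` be a matrix with `A i i = 2` and `A i j ≤ 0` off the diagonal, and
`M` a `g̃₀`-module spanned by weight vectors on which the actions of all `e i` and `f i` are
locally nilpotent. Then for `i ≠ j` the elements `(ad (e i))^{1 − A i j} (e j)` and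
`(ad (f i))^{1 − A i j} (f j)` of `g̃₀` act as zero on `M`. -/
theorem stmt_16 (n : ℕ) (A : Fin n → Fin n → ℤ)
    (hdiag : ∀ i, A i i = 2) (hoff : ∀ i j, i ≠ j → A i j ≤ 0)
    (M : Type*) [AddCommGroup M] [Module ℂ M]
    [LieRingModule (gTilde n A) M] [LieModule ℂ (gTilde n A) M]
    (hwt : (⊤ : Submodule ℂ M) ≤ Submodule.span ℂ
      {m : M | ∃ α : Fin n → ℂ, ∀ i : Fin n, ⁅hQ A i, m⁆ = α i • m})
    (hniE : ∀ (i : Fin n) (m : M), ∃ N : ℕ,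
      ((LieModule.toEnd ℂ (gTilde n A) M (eQ A i)) ^ N) m = 0)
    (hniF : ∀ (i : Fin n) (m : M), ∃ N : ℕ,
      ((LieModule.toEnd ℂ (gTilde n A) M (fQ A i)) ^ N) m = 0) :
    ∀ i j : Fin n, i ≠ j →
      (∀ m : M, ⁅((LieAlgebra.ad ℂ (gTilde n A) (eQ A i)) ^ (1 - A i j).toNat) (eQ A j), m⁆
        = 0) ∧
      (∀ m : M, ⁅((LieAlgebra.ad ℂ (gTilde n A) (fQ A i)) ^ (1 - A i j).toNat) (fQ A j), m⁆
        = 0) :=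
  stmt_16_general n A hdiag hoff M hniE hniF
end
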